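/- arXiv:2201.09343 — 6 statements merged into one kernel-verified Lean document; each statement's English description precedes it below -/
import Mathlib

section
/- If θ : ℝ → ℝ is twice continuously differentiable and satisfies −θ''(ρ) + f'(θ(ρ)) = 0 for all ρ ∈ ℝ, lim_{ρ→+∞} θ(ρ) = 1, lim_{ρ→−∞} θ(ρ) = −1, and θ(0) = 0, then θ(ρ) = tanh(ρ/2) for all ρ ∈ ℝ; i.e., the optimal profile is the unique solution of the optimal-profile problem. -/
open Filter

/-- Derivative of the real hyperbolic tangent. -/
lemma hasDerivAt_tanh' (x : ℝ) : HasDerivAt Real.tanh (1 - Real.tanh x ^ 2) x := by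
  have hc0 : Real.cosh x ≠ 0 := (Real.cosh_pos x).ne'
  have h : HasDerivAt (fun y => Real.sinh y / Real.cosh y) _ x := (Real.hasDerivAt_sinh x).div (Real.hasDerivAt_cosh x) hc0
  have heq : Real.tanh = fun y => Real.sinh y / Real.cosh y :=
    funext fun y => Real.tanh_eq_sinh_div_cosh y
  rw [heq]
  convert h using 1
  have h1 := Real.cosh_sq_sub_sinh_sq x
  have hc0' : Real.cosh x ^ 2 ≠ 0 := pow_ne_zero 2 hc0
  show 1 - (Real.sinh x / Real.cosh x) ^ 2 = _
  field_simp

/-- A solution of a scalar linear ODE `u' = a u` vanishing at `0` vanishes everywhere. -/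
lemma lin_ode_zero (u a : ℝ → ℝ) (ha : Continuous a)
    (hu : ∀ ρ, HasDerivAt u (a ρ * u ρ) ρ) (h0 : u 0 = 0) : ∀ ρ, u ρ = 0 := by
  set A : ℝ → ℝ := fun ρ => ∫ t in (0:ℝ)..ρ, a t with hAdef
  have hA' : ∀ ρ, HasDerivAt A (a ρ) ρ := fun ρ =>
    (ha.integral_hasStrictDerivAt 0 ρ).hasDerivAt
  set g : ℝ → ℝ := fun ρ => u ρ * Real.exp (-A ρ) with hgdef
  have hg' : ∀ ρ, HasDerivAt g 0 ρ := by
    intro ρ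
    have h1 : HasDerivAt (fun ρ => Real.exp (-A ρ)) (Real.exp (-A ρ) * (-a ρ)) ρ :=
      ((hA' ρ).neg).exp
    have h2 : HasDerivAt (fun ρ => u ρ * Real.exp (-A ρ)) _ ρ := (hu ρ).mul h1
    convert h2 using 1
    ring
  have hconst : ∀ ρ, g ρ = g 0 := fun ρ =>
    is_const_of_deriv_eq_zero (fun x => (hg' x).differentiableAt)
      (fun x => (hg' x).deriv) ρ 0
  intro ρ
  have hg0 : g 0 = 0 := by simp [hgdef, h0]
  have := hconst ρ
  rw [hg0] at this
  rcases mul_eq_zero.mp this with h | h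
  · exact h
  · exact absurd h (Real.exp_ne_zero _)

/-- Uniqueness of the optimal profile: any twice continuously differentiable solution of
`−θ'' + f'(θ) = 0` on `ℝ` (with `f(c) = (1/8)(c² − 1)²`, so `f'(c) = (1/2) c (c² − 1)`)
satisfying `θ(ρ) → ±1` as `ρ → ±∞` and `θ(0) = 0` equals `tanh(ρ/2)`. -/
theorem statement1 (θ : ℝ → ℝ) (hθ : ContDiff ℝ 2 θ)
    (hODE : ∀ ρ : ℝ, - deriv (deriv θ) ρ + (1 / 2) * θ ρ * ((θ ρ) ^ 2 - 1) = 0)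
    (htop : Tendsto θ atTop (nhds 1))
    (hbot : Tendsto θ atBot (nhds (-1)))
    (h0 : θ 0 = 0) :
    ∀ ρ : ℝ, θ ρ = Real.tanh (ρ / 2) := by
  -- Basic regularity facts
  have hθ1 : Differentiable ℝ θ := hθ.differentiable (by norm_num)
  have hθd1 : ContDiff ℝ 1 (deriv θ) := by
    have : ContDiff ℝ (1 + 1) θ := by norm_num; exact hθ
    exact (contDiff_succ_iff_deriv.mp this).2.2
  have hθ'd : Differentiable ℝ (deriv θ) := hθd1.differentiable one_ne_zero
  have hd : ∀ ρ, HasDerivAt θ (deriv θ ρ) ρ := fun ρ => (hθ1 ρ).hasDerivAt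
  have hd2 : ∀ ρ, HasDerivAt (deriv θ) (deriv (deriv θ) ρ) ρ := fun ρ => (hθ'd ρ).hasDerivAt
  have hODE' : ∀ ρ, deriv (deriv θ) ρ = (1/2) * θ ρ * (θ ρ ^ 2 - 1) := fun ρ => by
    linarith [hODE ρ]
  -- The energy is constant
  set E : ℝ → ℝ := fun ρ => (deriv θ ρ)^2/2 - (θ ρ^2 - 1)^2/8 with hEdef
  have hE' : ∀ ρ, HasDerivAt E 0 ρ := by
    intro ρ
    have h1 : HasDerivAt (fun ρ => (deriv θ ρ)^2/2)
        ((2 * deriv θ ρ ^ 1 * deriv (deriv θ) ρ)/2) ρ := ((hd2 ρ).pow 2).div_const 2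
    have h2 : HasDerivAt (fun ρ => (θ ρ^2 - 1)^2/8)
        ((2 * (θ ρ^2 - 1) ^ 1 * (2 * θ ρ ^ 1 * deriv θ ρ))/8) ρ :=
      ((((hd ρ).pow 2).sub_const 1).pow 2).div_const 8
    have h3 : HasDerivAt (fun ρ => (deriv θ ρ)^2/2 - (θ ρ^2 - 1)^2/8) _ ρ := h1.sub h2
    convert h3 using 1
    rw [hODE' ρ]
    ring
  have hEconst : ∀ ρ, E ρ = E 0 := fun ρ =>
    is_const_of_deriv_eq_zero (fun x => (hE' x).differentiableAt)
      (fun x => (hE' x).deriv) ρ 0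
  -- Mean value theorem sequence to identify the energy constant
  have hmvt : ∀ n : ℕ, ∃ cc : ℝ, (n:ℝ) < cc ∧ deriv θ cc = θ ((n:ℝ)+1) - θ (n:ℝ) := by
    intro n
    obtain ⟨cc, hcc, hcceq⟩ := exists_hasDerivAt_eq_slope θ (deriv θ)
      (by linarith : (n:ℝ) < (n:ℝ)+1) (hθ1.continuous.continuousOn) (fun x _ => hd x)
    refine ⟨cc, hcc.1, ?_⟩
    rw [hcceq]
    simp
  choose c hc1 hc3 using hmvt
  have hctop : Tendsto c atTop atTop :=
    tendsto_atTop_mono (fun n => (hc1 n).le) tendsto_natCast_atTop_atTop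
  have hθc : Tendsto (fun n => θ (c n)) atTop (nhds 1) := htop.comp hctop
  have hθ'c : Tendsto (fun n => deriv θ (c n)) atTop (nhds 0) := by
    have h1 : Tendsto (fun n : ℕ => θ ((n:ℝ)+1)) atTop (nhds 1) :=
      htop.comp (tendsto_atTop_add_const_right _ 1 tendsto_natCast_atTop_atTop)
    have h2 : Tendsto (fun n : ℕ => θ (n:ℝ)) atTop (nhds 1) :=
      htop.comp tendsto_natCast_atTop_atTop
    have h3 := h1.sub h2
    rw [sub_self] at h3
    refine h3.congr fun n => ?_
    rw [hc3 n]
  have hEc : Tendsto (fun n => E (c n)) atTop (nhds ((0:ℝ)^2/2 - ((1:ℝ)^2-1)^2/8)) := by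
    exact ((hθ'c.pow 2).div_const 2).sub ((((hθc.pow 2).sub_const 1).pow 2).div_const 8)
  have hE0 : E 0 = 0 := by
    have hconst : Tendsto (fun n : ℕ => E (c n)) atTop (nhds (E 0)) := by
      refine tendsto_const_nhds.congr fun n => (hEconst (c n)).symm
    have := tendsto_nhds_unique hconst hEc
    rw [this]; norm_num
  -- θ'(0) = ± 1/2
  have hd0sq : deriv θ 0 ^ 2 = 1/4 := by
    have h1 : E 0 = (deriv θ 0)^2/2 - (θ 0^2 - 1)^2/8 := rfl
    rw [hE0, h0] at h1
    nlinarith [h1]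
  have hcase : deriv θ 0 = 1/2 ∨ deriv θ 0 = -1/2 := by
    have : (deriv θ 0 - 1/2) * (deriv θ 0 + 1/2) = 0 := by nlinarith [hd0sq]
    rcases mul_eq_zero.mp this with h | h
    · left; linarith
    · right; linarith
  -- tanh facts
  set T : ℝ → ℝ := fun ρ => Real.tanh (ρ/2) with hTdef
  have hT' : ∀ ρ, HasDerivAt T ((1 - T ρ^2)/2) ρ := by
    intro ρ
    have h1 : HasDerivAt (fun ρ => Real.tanh (ρ/2)) ((1 - Real.tanh (ρ/2) ^ 2) * (1/2)) ρ := by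
      have h := (hasDerivAt_tanh' (ρ/2)).comp ρ ((hasDerivAt_id ρ).div_const 2); exact h
    convert h1 using 1
    simp [hTdef]
    ring
  have hTc : Continuous T :=
    continuous_iff_continuousAt.mpr fun x => (hT' x).differentiableAt.continuousAt
  have hT0 : T 0 = 0 := by simp [hTdef, Real.tanh_zero]
  rcases hcase with hpos | hneg
  · -- main case : θ' = (1 - θ²)/2
    set w : ℝ → ℝ := fun ρ => deriv θ ρ - (1 - θ ρ^2)/2 with hwdef
    have hw' : ∀ ρ, HasDerivAt w (θ ρ * w ρ) ρ := by
      intro ρ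
      have h1 : HasDerivAt (fun ρ => (1 - θ ρ^2)/2)
          ((0 - 2 * θ ρ ^ 1 * deriv θ ρ)/2) ρ :=
        ((hasDerivAt_const ρ (1:ℝ)).sub ((hd ρ).pow 2)).div_const 2
      have h2 : HasDerivAt (fun ρ => deriv θ ρ - (1 - θ ρ^2)/2) _ ρ := (hd2 ρ).sub h1
      convert h2 using 1
      rw [hODE' ρ]
      simp only [hwdef]
      ring
    have hw0 : ∀ ρ, w ρ = 0 :=
      lin_ode_zero w θ hθ1.continuous hw' (by simp [hwdef, h0, hpos])
    set u : ℝ → ℝ := fun ρ => θ ρ - T ρ with hudef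
    have hu' : ∀ ρ, HasDerivAt u ((-(θ ρ + T ρ)/2) * u ρ) ρ := by
      intro ρ
      have hdθρ : deriv θ ρ = (1 - θ ρ^2)/2 := by
        have := hw0 ρ; simp only [hwdef] at this; linarith
      have h1 : HasDerivAt (fun ρ => θ ρ - T ρ) _ ρ := (hd ρ).sub (hT' ρ)
      rw [hdθρ] at h1
      convert h1 using 1
      simp only [hudef]
      ring
    have hu0 : ∀ ρ, u ρ = 0 :=
      lin_ode_zero u (fun ρ => -(θ ρ + T ρ)/2)
        (((hθ1.continuous.add hTc).neg).div_const 2) hu' (by simp [hudef, h0, hT0])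
    intro ρ
    have := hu0 ρ
    simp only [hudef, hTdef] at this
    linarith
  · -- impossible case : θ' = -(1 - θ²)/2, forcing θ = -tanh(·/2)
    exfalso
    set v : ℝ → ℝ := fun ρ => deriv θ ρ + (1 - θ ρ^2)/2 with hvdef
    have hv' : ∀ ρ, HasDerivAt v (-θ ρ * v ρ) ρ := by
      intro ρ
      have h1 : HasDerivAt (fun ρ => (1 - θ ρ^2)/2)
          ((0 - 2 * θ ρ ^ 1 * deriv θ ρ)/2) ρ :=
        ((hasDerivAt_const ρ (1:ℝ)).sub ((hd ρ).pow 2)).div_const 2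
      have h2 : HasDerivAt (fun ρ => deriv θ ρ + (1 - θ ρ^2)/2) _ ρ := (hd2 ρ).add h1
      convert h2 using 1
      rw [hODE' ρ]
      simp only [hvdef]
      ring
    have hv0 : ∀ ρ, v ρ = 0 :=
      lin_ode_zero v (fun ρ => -θ ρ) hθ1.continuous.neg hv'
        (by simp only [hvdef]; rw [h0, hneg]; norm_num)
    set u : ℝ → ℝ := fun ρ => θ ρ + T ρ with hudef
    have hu' : ∀ ρ, HasDerivAt u (((θ ρ - T ρ)/2) * u ρ) ρ := by
      intro ρ
      have hdθρ : deriv θ ρ = -(1 - θ ρ^2)/2 := by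
        have := hv0 ρ; simp only [hvdef] at this; linarith
      have h1 : HasDerivAt (fun ρ => θ ρ + T ρ) _ ρ := (hd ρ).add (hT' ρ)
      rw [hdθρ] at h1
      convert h1 using 1
      simp only [hudef]
      ring
    have hu0 : ∀ ρ, u ρ = 0 :=
      lin_ode_zero u (fun ρ => (θ ρ - T ρ)/2) ((hθ1.continuous.sub hTc).div_const 2) hu'
        (by simp [hudef, h0, hT0])
    -- hence θ = -tanh(·/2), contradicting θ → 1 at +∞
    have hev : ∀ᶠ ρ in atTop, 1/2 < θ ρ :=
      htop.eventually (eventually_gt_nhds (by norm_num))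
    obtain ⟨ρ, hρhalf, hρ0⟩ := (hev.and (eventually_ge_atTop (0:ℝ))).exists
    have htanh : 0 ≤ T ρ := by
      simp only [hTdef, Real.tanh_eq_sinh_div_cosh]
      exact div_nonneg (Real.sinh_nonneg_iff.mpr (by linarith)) (Real.cosh_pos _).le
    have := hu0 ρ
    simp only [hudef] at this
    linarith
end

section
/- Every twice continuously differentiable function θ : ℝ → ℝ satisfying −θ''(ρ) + f'(θ(ρ)) = 0 for all ρ ∈ ℝ with lim_{ρ→+∞} θ(ρ) = 1 and lim_{ρ→−∞} θ(ρ) = −1 obeys the first-integral (equipartition) identity θ'(ρ)² = 2 f(θ(ρ)) for all ρ ∈ ℝ. -/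
open Filter

/-- Equipartition of energy (first integral): any twice continuously differentiable solution of
`−θ'' + f'(θ) = 0` on `ℝ` with `θ(ρ) → ±1` as `ρ → ±∞` satisfies `(θ')² = 2 f(θ)`,
where `f(c) = (1/8)(c² − 1)²` and `f'(c) = (1/2) c (c² − 1)`. -/
theorem statement2 (θ : ℝ → ℝ) (hθ : ContDiff ℝ 2 θ)
    (hODE : ∀ ρ : ℝ, - deriv (deriv θ) ρ + (1 / 2) * θ ρ * ((θ ρ) ^ 2 - 1) = 0)
    (htop : Tendsto θ atTop (nhds 1))
    (hbot : Tendsto θ atBot (nhds (-1))) :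
    ∀ ρ : ℝ, (deriv θ ρ) ^ 2 = 2 * ((1 / 8) * ((θ ρ) ^ 2 - 1) ^ 2) := by
  set E : ℝ → ℝ := fun x => (deriv θ x) ^ 2 - 2 * ((1 / 8) * ((θ x) ^ 2 - 1) ^ 2) with hEdef
  have hθ2 : ContDiff ℝ (1 + 1) θ := by exact_mod_cast hθ
  have hθ1 : ContDiff ℝ 1 (deriv θ) := (contDiff_succ_iff_deriv.mp hθ2).2.2
  have hd1 : ∀ x : ℝ, HasDerivAt θ (deriv θ x) x :=
    fun x => ((hθ.differentiable two_ne_zero) x).hasDerivAt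
  have hd2 : ∀ x : ℝ, HasDerivAt (deriv θ) (deriv (deriv θ) x) x :=
    fun x => ((hθ1.differentiable one_ne_zero) x).hasDerivAt
  have hE' : ∀ x : ℝ, HasDerivAt E 0 x := by
    intro x
    have hA : HasDerivAt (fun x => (deriv θ x) ^ 2)
        (2 * deriv θ x ^ 1 * deriv (deriv θ) x) x := (hd2 x).pow 2
    have hB : HasDerivAt (fun x => 2 * ((1 / 8) * ((θ x) ^ 2 - 1) ^ 2))
        (2 * ((1 / 8) * (2 * ((θ x) ^ 2 - 1) ^ 1 * (2 * θ x ^ 1 * deriv θ x)))) x :=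
      ((((hd1 x).pow 2).sub_const 1).pow 2).const_mul (1/8) |>.const_mul 2
    have := hA.sub hB
    convert this using 1
    · rfl
    · rfl
    · rfl
    linear_combination (2 * deriv θ x) * hODE x
  have hconst : ∀ x : ℝ, E x = E 0 :=
    fun x => is_const_of_deriv_eq_zero (fun y => (hE' y).differentiableAt)
      (fun y => (hE' y).deriv) x 0
  -- MVT: pick ξ n in (n, n+1) with θ'(ξ n) = θ(n+1) - θ(n)
  have hmvt : ∀ n : ℕ, ∃ ξ ∈ Set.Ioo (n : ℝ) ((n : ℝ) + 1),
      deriv θ ξ = (θ ((n : ℝ) + 1) - θ (n : ℝ)) / (((n : ℝ) + 1) - n) := by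
    intro n
    exact exists_hasDerivAt_eq_slope θ (deriv θ) (by linarith)
      (hθ.continuous.continuousOn) (fun x _ => hd1 x)
  choose ξ hξmem hξval using hmvt
  have hξtop : Tendsto ξ atTop atTop :=
    tendsto_atTop_mono (fun n => le_of_lt (hξmem n).1) tendsto_natCast_atTop_atTop
  have h1 : Tendsto (fun n => θ (ξ n)) atTop (nhds 1) := htop.comp hξtop
  have h2 : Tendsto (fun n : ℕ => θ ((n : ℝ) + 1) - θ (n : ℝ)) atTop (nhds 0) := by
    have := (htop.comp (tendsto_atTop_add_const_right atTop (1 : ℝ)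
      tendsto_natCast_atTop_atTop)).sub (htop.comp tendsto_natCast_atTop_atTop)
    simpa using this
  have h3 : Tendsto (fun n => E (ξ n)) atTop (nhds 0) := by
    have hlim : Tendsto (fun n : ℕ => (θ ((n : ℝ) + 1) - θ (n : ℝ)) ^ 2
        - 2 * ((1 / 8) * ((θ (ξ n)) ^ 2 - 1) ^ 2)) atTop
        (nhds ((0 : ℝ) ^ 2 - 2 * ((1 / 8) * ((1 : ℝ) ^ 2 - 1) ^ 2))) :=
      (h2.pow 2).sub (((((h1.pow 2).sub_const 1).pow 2).const_mul (1/8)).const_mul 2)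
    have heq : (fun n => E (ξ n)) = fun n : ℕ => (θ ((n : ℝ) + 1) - θ (n : ℝ)) ^ 2
        - 2 * ((1 / 8) * ((θ (ξ n)) ^ 2 - 1) ^ 2) := by
      funext n
      have h := hξval n
      simp only [hEdef]
      rw [h]
      ring
    rw [heq]
    convert hlim using 2
    norm_num
  have hE0 : E 0 = 0 := by
    have : Tendsto (fun n : ℕ => E (ξ n)) atTop (nhds (E 0)) := by
      simp only [hconst]; exact tendsto_const_nhds
    exact tendsto_nhds_unique this h3
  intro ρ
  have := hconst ρ
  rw [hE0] at this
  simp only [hEdef] at this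
  linarith
end

section
/- Let α ∈ (0,1), C₀ > 0, let A : ℝ → ℝ be continuous, and let A⁺, A⁻ ∈ ℝ be such that |A(ρ) − A⁺| ≤ C₀ e^{−αρ} and |A(−ρ) − A⁻| ≤ C₀ e^{−αρ} for all ρ ≥ 0. Then there exists a bounded, twice continuously differentiable function w : ℝ → ℝ with w''(ρ) − f''(θ₀(ρ)) w(ρ) = A(ρ) for all ρ ∈ ℝ and w(0) = 0 if and only if ∫_ℝ A(ρ) θ₀'(ρ) dρ = 0. -/
open MeasureTheory

/-- The optimal profile `θ₀(ρ) = tanh(ρ/2)`. -/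
noncomputable def optimalProfile : ℝ → ℝ := fun ρ => Real.tanh (ρ / 2)



open Real Set intervalIntegral


noncomputable def th (ρ : ℝ) : ℝ := Real.sinh (ρ/2) / Real.cosh (ρ/2)
noncomputable def phiF (ρ : ℝ) : ℝ := (1/2) * (1 - th ρ ^ 2)
noncomputable def Vq (ρ : ℝ) : ℝ := (1/2) * (3 * th ρ ^ 2 - 1)

lemma hasDerivAt_th (ρ : ℝ) : HasDerivAt th (phiF ρ) ρ := by
  have h1 : HasDerivAt (fun x : ℝ => Real.sinh (x/2)) (Real.cosh (ρ/2) * (1/2)) ρ := by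
    simpa [Function.comp_def] using (Real.hasDerivAt_sinh (ρ/2)).comp ρ ((hasDerivAt_id ρ).div_const 2)
  have h2 : HasDerivAt (fun x : ℝ => Real.cosh (x/2)) (Real.sinh (ρ/2) * (1/2)) ρ := by
    simpa [Function.comp_def] using (Real.hasDerivAt_cosh (ρ/2)).comp ρ ((hasDerivAt_id ρ).div_const 2)
  have hc : Real.cosh (ρ/2) ≠ 0 := (Real.cosh_pos _).ne'
  have h := h1.div h2 hc
  refine h.congr_deriv (Eq.symm ?_)
  simp only [phiF, th]
  field_simp

lemma continuous_th : Continuous th :=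
  continuous_iff_continuousAt.mpr fun x => (hasDerivAt_th x).continuousAt

lemma continuous_phiF : Continuous phiF := by
  exact continuous_const.mul (continuous_const.sub (continuous_th.pow 2))

lemma hasDerivAt_phiF (ρ : ℝ) : HasDerivAt phiF (-(th ρ * phiF ρ)) ρ := by
  have h := (((hasDerivAt_th ρ).pow 2).const_sub (1 : ℝ)).const_mul (1/2 : ℝ)
  refine h.congr_deriv (Eq.symm ?_)
  push_cast
  simp only [phiF]
  ring

lemma hasDerivAt_negThPhi (ρ : ℝ) :
    HasDerivAt (fun x => -(th x * phiF x)) (Vq ρ * phiF ρ) ρ := by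
  have h := ((hasDerivAt_th ρ).mul (hasDerivAt_phiF ρ)).neg
  refine h.congr_deriv (Eq.symm ?_)
  simp only [Vq, phiF]
  ring

lemma cosh_sq_inv (x : ℝ) : 1 - (Real.sinh x / Real.cosh x) ^ 2 = (Real.cosh x ^ 2)⁻¹ := by
  have hc : Real.cosh x ≠ 0 := (Real.cosh_pos _).ne'
  have h := Real.cosh_sq_sub_sinh_sq x
  field_simp
  exact h

lemma phiF_eq (ρ : ℝ) : phiF ρ = (1/2) * (Real.cosh (ρ/2) ^ 2)⁻¹ := by
  unfold phiF th
  rw [cosh_sq_inv]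

lemma phiF_pos (ρ : ℝ) : 0 < phiF ρ := by
  rw [phiF_eq]; positivity

lemma exp_abs_le_two_cosh (x : ℝ) : Real.exp |x| ≤ 2 * Real.cosh x := by
  rw [Real.cosh_eq]
  rcases abs_cases x with ⟨h, _⟩ | ⟨h, _⟩ <;> rw [h] <;>
    linarith [Real.exp_pos x, Real.exp_pos (-x)]

lemma cosh_le_exp_abs (x : ℝ) : Real.cosh x ≤ Real.exp |x| := by
  have h1 := Real.exp_le_exp.mpr (le_abs_self x)
  have h2 := Real.exp_le_exp.mpr (neg_le_abs x)
  rw [Real.cosh_eq]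
  linarith

lemma abs_half (ρ : ℝ) : |ρ/2| = |ρ|/2 := by
  rw [abs_div, abs_two]

lemma phiF_le (ρ : ℝ) : phiF ρ ≤ 2 * Real.exp (-|ρ|) := by
  have hc : (0:ℝ) < Real.cosh (ρ/2) ^ 2 := by positivity
  have h2 : Real.exp |ρ| ≤ 4 * Real.cosh (ρ/2) ^ 2 := by
    have h := exp_abs_le_two_cosh (ρ/2)
    have h3 : Real.exp |ρ| = Real.exp |ρ/2| ^ 2 := by
      rw [← Real.exp_nat_mul]
      congr 1
      rw [abs_half]
      push_cast
      ring
    rw [h3]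
    nlinarith [Real.exp_pos |ρ/2|, Real.cosh_pos (ρ/2)]
  have key : phiF ρ * Real.exp |ρ| ≤ 2 := by
    rw [phiF_eq]
    calc (1/2) * (Real.cosh (ρ/2)^2)⁻¹ * Real.exp |ρ|
        ≤ (1/2) * (Real.cosh (ρ/2)^2)⁻¹ * (4 * Real.cosh (ρ/2)^2) := by
          apply mul_le_mul_of_nonneg_left h2; positivity
      _ = 2 := by field_simp; ring
  have : phiF ρ ≤ 2 / Real.exp |ρ| := (le_div_iff₀ (Real.exp_pos _)).mpr key
  simpa [Real.exp_neg, div_eq_mul_inv] using this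

lemma inv_sq_phiF_le (ρ : ℝ) : ((phiF ρ) ^ 2)⁻¹ ≤ 4 * Real.exp (2 * |ρ|) := by
  have hc := Real.cosh_pos (ρ/2)
  have h2 : Real.cosh (ρ/2) ^ 4 ≤ Real.exp (2 * |ρ|) := by
    have h3 : Real.exp (2 * |ρ|) = Real.exp |ρ/2| ^ 4 := by
      rw [← Real.exp_nat_mul]
      congr 1
      rw [abs_half]
      push_cast
      ring
    rw [h3]
    exact pow_le_pow_left₀ hc.le (cosh_le_exp_abs (ρ/2)) 4
  calc ((phiF ρ)^2)⁻¹ = 4 * Real.cosh (ρ/2)^4 := by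
        rw [phiF_eq]; field_simp; ring
    _ ≤ 4 * Real.exp (2 * |ρ|) := by linarith

lemma abs_th_le (ρ : ℝ) : |th ρ| ≤ 1 := by
  have := phiF_pos ρ
  unfold phiF at this
  nlinarith [sq_abs (th ρ), abs_nonneg (th ρ)]

lemma abs_Vq_le (ρ : ℝ) : |Vq ρ| ≤ 1 := by
  have h := abs_th_le ρ
  have h2 : th ρ ^ 2 ≤ 1 := by nlinarith [sq_abs (th ρ), abs_nonneg (th ρ)]
  have h3 : 0 ≤ th ρ ^ 2 := sq_nonneg _
  rw [Vq, abs_le]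
  constructor <;> nlinarith

-- exponential interval integral helper
lemma int_exp_mul (c a b : ℝ) (hc : c ≠ 0) :
    ∫ τ in a..b, Real.exp (c * τ) = (Real.exp (c * b) - Real.exp (c * a)) / c := by
  have h : ∀ x ∈ Set.uIcc a b, HasDerivAt (fun τ => Real.exp (c * τ) / c) (Real.exp (c * x)) x := by
    intro x _
    have := ((Real.hasDerivAt_exp (c * x)).comp x ((hasDerivAt_id x).const_mul c)).div_const c
    simpa [mul_comm, mul_div_assoc, mul_div_cancel_left₀ _ hc] using this
  rw [intervalIntegral.integral_eq_sub_of_hasDerivAt h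
    ((Real.continuous_exp.comp (continuous_const.mul continuous_id)).intervalIntegrable a b)]
  ring

noncomputable def gI (ρ : ℝ) : ℝ := ∫ τ in (0:ℝ)..ρ, ((phiF τ)^2)⁻¹
noncomputable def psiF (ρ : ℝ) : ℝ := phiF ρ * gI ρ
noncomputable def psid (ρ : ℝ) : ℝ := -(th ρ * psiF ρ) + (phiF ρ)⁻¹

lemma continuous_invsq : Continuous fun τ => ((phiF τ)^2)⁻¹ :=
  (continuous_phiF.pow 2).inv₀ fun x => (pow_pos (phiF_pos x) 2).ne'

lemma hasDerivAt_gI (ρ : ℝ) : HasDerivAt gI ((phiF ρ)^2)⁻¹ ρ :=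
  (continuous_invsq.integral_hasStrictDerivAt 0 ρ).hasDerivAt

lemma hasDerivAt_psiF (ρ : ℝ) : HasDerivAt psiF (psid ρ) ρ := by
  have h := (hasDerivAt_phiF ρ).mul (hasDerivAt_gI ρ)
  refine h.congr_deriv (Eq.symm ?_)
  have hφ : phiF ρ ≠ 0 := (phiF_pos ρ).ne'
  simp only [psid, psiF]
  field_simp

lemma hasDerivAt_psid (ρ : ℝ) : HasDerivAt psid (Vq ρ * psiF ρ) ρ := by
  have h1 : HasDerivAt (fun x => -(th x * psiF x))
      (-(phiF ρ * psiF ρ + th ρ * psid ρ)) ρ := by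
    exact ((hasDerivAt_th ρ).mul (hasDerivAt_psiF ρ)).neg.congr_deriv (by ring)
  have h2 : HasDerivAt (fun x => (phiF x)⁻¹) (th ρ * (phiF ρ)⁻¹) ρ := by
    have := (hasDerivAt_phiF ρ).inv (phiF_pos ρ).ne'
    refine this.congr_deriv (Eq.symm ?_)
    have hφ : phiF ρ ≠ 0 := (phiF_pos ρ).ne'
    field_simp
  have h := h1.add h2
  refine h.congr_deriv (Eq.symm ?_)
  have hφ : phiF ρ ≠ 0 := (phiF_pos ρ).ne'
  have hφ2 : 1 - th ρ ^ 2 ≠ 0 := fun h0 => hφ (by simp only [phiF]; rw [h0]; ring)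
  simp only [Vq, psid, psiF, phiF]
  field_simp
  ring

lemma wronskian (ρ : ℝ) : phiF ρ * psid ρ + th ρ * phiF ρ * psiF ρ = 1 := by
  have hφ : phiF ρ ≠ 0 := (phiF_pos ρ).ne'
  simp only [psid]
  field_simp
  ring

lemma psiF_zero : psiF 0 = 0 := by
  simp [psiF, gI]

lemma continuous_psiF : Continuous psiF :=
  continuous_iff_continuousAt.mpr fun x => (hasDerivAt_psiF x).continuousAt

lemma abs_gI_le (ρ : ℝ) : |gI ρ| ≤ 2 * Real.exp (2 * |ρ|) := by
  have hint : ∀ a b : ℝ, IntervalIntegrable (fun τ => ((phiF τ)^2)⁻¹) volume a b :=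
    fun a b => continuous_invsq.intervalIntegrable a b
  have hexp : ∀ a b : ℝ, IntervalIntegrable (fun τ => 4 * Real.exp (2*τ)) volume a b :=
    fun a b => (continuous_const.mul (Real.continuous_exp.comp
      (continuous_const.mul continuous_id))).intervalIntegrable a b
  have hexp' : ∀ a b : ℝ, IntervalIntegrable (fun τ => 4 * Real.exp (-2*τ)) volume a b :=
    fun a b => (continuous_const.mul (Real.continuous_exp.comp
      (continuous_const.mul continuous_id))).intervalIntegrable a b
  rcases le_or_gt 0 ρ with hρ | hρ
  · rw [abs_of_nonneg hρ]
    have h1 : |gI ρ| ≤ ∫ τ in (0:ℝ)..ρ, |((phiF τ)^2)⁻¹| :=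
      intervalIntegral.abs_integral_le_integral_abs hρ
    have h2 : (∫ τ in (0:ℝ)..ρ, |((phiF τ)^2)⁻¹|) ≤ ∫ τ in (0:ℝ)..ρ, 4 * Real.exp (2*τ) := by
      apply intervalIntegral.integral_mono_on hρ (hint 0 ρ).abs (hexp 0 ρ)
      intro x hx
      rw [abs_of_nonneg (by positivity)]
      calc ((phiF x)^2)⁻¹ ≤ 4 * Real.exp (2 * |x|) := inv_sq_phiF_le x
        _ = 4 * Real.exp (2 * x) := by rw [abs_of_nonneg hx.1]
    have h3 : (∫ τ in (0:ℝ)..ρ, 4 * Real.exp (2*τ)) ≤ 2 * Real.exp (2*ρ) := by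
      rw [intervalIntegral.integral_const_mul, int_exp_mul 2 0 ρ two_ne_zero]
      have h0 : (0:ℝ) < Real.exp (2*0) := Real.exp_pos _
      have he2 : 4 * ((Real.exp (2*ρ) - Real.exp (2*0))/2) = 2*Real.exp (2*ρ) - 2*Real.exp (2*0) := by ring
      rw [he2]
      linarith
    linarith
  · rw [abs_of_neg hρ]
    have hρ' : ρ ≤ 0 := hρ.le
    have hsym : gI ρ = -∫ τ in ρ..(0:ℝ), ((phiF τ)^2)⁻¹ := by
      rw [gI, intervalIntegral.integral_symm]
    rw [hsym, abs_neg]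
    have h1 : |∫ τ in ρ..(0:ℝ), ((phiF τ)^2)⁻¹| ≤ ∫ τ in ρ..(0:ℝ), |((phiF τ)^2)⁻¹| :=
      intervalIntegral.abs_integral_le_integral_abs hρ'
    have h2 : (∫ τ in ρ..(0:ℝ), |((phiF τ)^2)⁻¹|) ≤ ∫ τ in ρ..(0:ℝ), 4 * Real.exp (-2*τ) := by
      apply intervalIntegral.integral_mono_on hρ' (hint ρ 0).abs (hexp' ρ 0)
      intro x hx
      rw [abs_of_nonneg (by positivity)]
      calc ((phiF x)^2)⁻¹ ≤ 4 * Real.exp (2 * |x|) := inv_sq_phiF_le x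
        _ ≤ 4 * Real.exp (-2 * x) := by
          rcases abs_cases x with ⟨h, hx0⟩ | ⟨h, _⟩
          · have hxz : x = 0 := le_antisymm hx.2 hx0
            rw [h, hxz]; norm_num
          · rw [h]; apply le_of_eq; congr 1; ring
    have h3 : (∫ τ in ρ..(0:ℝ), 4 * Real.exp (-2*τ)) ≤ 2 * Real.exp (-(2*ρ)) := by
      rw [intervalIntegral.integral_const_mul, int_exp_mul (-2) ρ 0 (by norm_num)]
      have h0 : (0:ℝ) < Real.exp (-2*0) := Real.exp_pos _
      have he : -(2*ρ) = -2*ρ := by ring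
      rw [he]
      have he2 : 4 * ((Real.exp (-2*0) - Real.exp (-2*ρ))/(-2)) = 2*Real.exp (-2*ρ) - 2*Real.exp (-2*0) := by ring
      rw [he2]
      linarith
    calc |∫ τ in ρ..(0:ℝ), ((phiF τ)^2)⁻¹| ≤ ∫ τ in ρ..(0:ℝ), 4 * Real.exp (-2*τ) := le_trans h1 h2
      _ ≤ 2 * Real.exp (-(2*ρ)) := h3
      _ = 2 * Real.exp (2 * -ρ) := by ring_nf

lemma abs_psiF_le (ρ : ℝ) : |psiF ρ| ≤ 4 * Real.exp |ρ| := by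
  have h1 : |psiF ρ| = phiF ρ * |gI ρ| := by
    rw [psiF, abs_mul, abs_of_pos (phiF_pos ρ)]
  rw [h1]
  calc phiF ρ * |gI ρ| ≤ (2 * Real.exp (-|ρ|)) * (2 * Real.exp (2*|ρ|)) := by
        apply mul_le_mul (phiF_le ρ) (abs_gI_le ρ) (abs_nonneg _) (by positivity)
    _ = 4 * (Real.exp (-|ρ|) * Real.exp (2*|ρ|)) := by ring
    _ = 4 * Real.exp |ρ| := by rw [← Real.exp_add]; congr 1; ring

lemma integrable_exp_neg_abs : Integrable (fun x : ℝ => Real.exp (-|x|)) := by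
  have h1 : IntegrableOn (fun x : ℝ => Real.exp (-|x|)) (Iic 0) := by
    apply (integrableOn_exp_Iic 0).congr_fun _ measurableSet_Iic
    intro x hx
    simp only [Set.mem_Iic] at hx
    simp only []
    rw [abs_of_nonpos hx, neg_neg]
  have h2 : IntegrableOn (fun x : ℝ => Real.exp (-|x|)) (Ioi 0) := by
    have h0 : IntegrableOn (fun x : ℝ => Real.exp (-x)) (Ioi 0) := by
      simpa using exp_neg_integrableOn_Ioi (0:ℝ) one_pos
    apply h0.congr_fun _ measurableSet_Ioi
    intro x hx
    simp only [Set.mem_Ioi] at hx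
    simp only []
    rw [abs_of_pos hx]
  have := h1.union h2
  rw [Set.Iic_union_Ioi] at this
  exact integrableOn_univ.mp this

lemma integrable_mul_phiF {A : ℝ → ℝ} (hA : Continuous A) {CA : ℝ}
    (hCA : ∀ ρ, |A ρ| ≤ CA) : Integrable (fun ρ => A ρ * phiF ρ) := by
  apply Integrable.mono' (integrable_exp_neg_abs.const_mul (2*CA))
    (hA.mul continuous_phiF).aestronglyMeasurable
  refine Filter.Eventually.of_forall fun ρ => ?_
  have h1 := phiF_le ρ
  have h2 := phiF_pos ρ
  have h3 := hCA ρ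
  have h4 : (0:ℝ) ≤ CA := le_trans (abs_nonneg _) (hCA 0)
  rw [Real.norm_eq_abs, Pi.mul_apply, abs_mul, abs_of_pos h2]
  calc |A ρ| * phiF ρ ≤ CA * (2 * Real.exp (-|ρ|)) := by
        apply mul_le_mul h3 h1 h2.le h4
    _ = 2*CA * Real.exp (-|ρ|) := by ring

lemma tail_bound_Ioi {A : ℝ → ℝ} (hA : Continuous A) {CA : ℝ}
    (hCA : ∀ ρ, |A ρ| ≤ CA) {ρ : ℝ} (hρ : 0 ≤ ρ) :
    |∫ τ in Ioi ρ, A τ * phiF τ| ≤ 2*CA * Real.exp (-ρ) := by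
  have h4 : (0:ℝ) ≤ CA := le_trans (abs_nonneg _) (hCA 0)
  have hg : IntegrableOn (fun τ => 2*CA * Real.exp (-τ)) (Ioi ρ) := by
    have h0 : IntegrableOn (fun x : ℝ => Real.exp (-x)) (Ioi ρ) := by
      simpa using exp_neg_integrableOn_Ioi ρ one_pos
    exact h0.const_mul (2*CA)
  have hb : ‖∫ τ in Ioi ρ, A τ * phiF τ‖ ≤ ∫ τ in Ioi ρ, 2*CA * Real.exp (-τ) := by
    apply MeasureTheory.norm_integral_le_of_norm_le hg
    rw [ae_restrict_iff' measurableSet_Ioi]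
    refine Filter.Eventually.of_forall fun τ hτ => ?_
    simp only [Set.mem_Ioi] at hτ
    have hτ0 : 0 ≤ τ := le_trans hρ hτ.le
    rw [Real.norm_eq_abs, abs_mul, abs_of_pos (phiF_pos τ)]
    calc |A τ| * phiF τ ≤ CA * (2 * Real.exp (-|τ|)) :=
          mul_le_mul (hCA τ) (phiF_le τ) (phiF_pos τ).le h4
      _ = 2*CA * Real.exp (-τ) := by rw [abs_of_nonneg hτ0]; ring
  have hval : ∫ τ in Ioi ρ, 2*CA * Real.exp (-τ) = 2*CA * Real.exp (-ρ) := by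
    rw [MeasureTheory.integral_const_mul, integral_exp_neg_Ioi]
  rw [← Real.norm_eq_abs]
  rw [hval] at hb
  exact hb

lemma tail_bound_Iic {A : ℝ → ℝ} (hA : Continuous A) {CA : ℝ}
    (hCA : ∀ ρ, |A ρ| ≤ CA) {ρ : ℝ} (hρ : ρ ≤ 0) :
    |∫ τ in Iic ρ, A τ * phiF τ| ≤ 2*CA * Real.exp ρ := by
  have h4 : (0:ℝ) ≤ CA := le_trans (abs_nonneg _) (hCA 0)
  have hg : IntegrableOn (fun τ => 2*CA * Real.exp τ) (Iic ρ) :=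
    (integrableOn_exp_Iic ρ).const_mul (2*CA)
  have hb : ‖∫ τ in Iic ρ, A τ * phiF τ‖ ≤ ∫ τ in Iic ρ, 2*CA * Real.exp τ := by
    apply MeasureTheory.norm_integral_le_of_norm_le hg
    rw [ae_restrict_iff' measurableSet_Iic]
    refine Filter.Eventually.of_forall fun τ hτ => ?_
    simp only [Set.mem_Iic] at hτ
    have hτ0 : τ ≤ 0 := le_trans hτ hρ
    rw [Real.norm_eq_abs, abs_mul, abs_of_pos (phiF_pos τ)]
    calc |A τ| * phiF τ ≤ CA * (2 * Real.exp (-|τ|)) :=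
          mul_le_mul (hCA τ) (phiF_le τ) (phiF_pos τ).le h4
      _ = 2*CA * Real.exp τ := by rw [abs_of_nonpos hτ0, neg_neg]; ring
  have hval : ∫ τ in Iic ρ, 2*CA * Real.exp τ = 2*CA * Real.exp ρ := by
    rw [MeasureTheory.integral_const_mul, integral_exp_Iic]
  rw [← Real.norm_eq_abs]
  rw [hval] at hb
  exact hb

lemma G_bound {A : ℝ → ℝ} (hA : Continuous A) {CA : ℝ}
    (hCA : ∀ ρ, |A ρ| ≤ CA) (ρ : ℝ) :
    |∫ τ in (0:ℝ)..ρ, A τ * psiF τ| ≤ 4*CA * Real.exp |ρ| := by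
  have h4 : (0:ℝ) ≤ CA := le_trans (abs_nonneg _) (hCA 0)
  have hint : ∀ a b : ℝ, IntervalIntegrable (fun τ => A τ * psiF τ) volume a b :=
    fun a b => (hA.mul continuous_psiF).intervalIntegrable a b
  have habs : ∀ a b : ℝ, IntervalIntegrable (fun τ => |A τ * psiF τ|) volume a b :=
    fun a b => (hint a b).abs
  have hbnd : ∀ τ : ℝ, |A τ * psiF τ| ≤ 4*CA*Real.exp |τ| := by
    intro τ
    rw [abs_mul]
    calc |A τ| * |psiF τ| ≤ CA * (4 * Real.exp |τ|) :=
          mul_le_mul (hCA τ) (abs_psiF_le τ) (abs_nonneg _) h4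
      _ = 4*CA*Real.exp |τ| := by ring
  rcases le_or_gt 0 ρ with hρ | hρ
  · have hexp : IntervalIntegrable (fun τ => 4*CA*Real.exp τ) volume 0 ρ :=
      (continuous_const.mul Real.continuous_exp).intervalIntegrable 0 ρ
    have h1 : |∫ τ in (0:ℝ)..ρ, A τ * psiF τ| ≤ ∫ τ in (0:ℝ)..ρ, |A τ * psiF τ| :=
      intervalIntegral.abs_integral_le_integral_abs hρ
    have h2 : (∫ τ in (0:ℝ)..ρ, |A τ * psiF τ|) ≤ ∫ τ in (0:ℝ)..ρ, 4*CA*Real.exp τ := by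
      apply intervalIntegral.integral_mono_on hρ (habs 0 ρ) hexp
      intro x hx
      calc |A x * psiF x| ≤ 4*CA*Real.exp |x| := hbnd x
        _ = 4*CA*Real.exp x := by rw [abs_of_nonneg hx.1]
    have h3 : (∫ τ in (0:ℝ)..ρ, 4*CA*Real.exp τ) ≤ 4*CA*Real.exp ρ := by
      rw [intervalIntegral.integral_const_mul, integral_exp]
      nlinarith [Real.exp_pos ρ, Real.exp_pos (0:ℝ), Real.exp_zero]
    rw [abs_of_nonneg hρ]
    linarith
  · have hρ' : ρ ≤ 0 := hρ.le
    have hexp : IntervalIntegrable (fun τ => 4*CA*Real.exp (-τ)) volume ρ 0 :=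
      (continuous_const.mul (Real.continuous_exp.comp continuous_neg)).intervalIntegrable ρ 0
    rw [intervalIntegral.integral_symm, abs_neg]
    have h1 : |∫ τ in ρ..(0:ℝ), A τ * psiF τ| ≤ ∫ τ in ρ..(0:ℝ), |A τ * psiF τ| :=
      intervalIntegral.abs_integral_le_integral_abs hρ'
    have h2 : (∫ τ in ρ..(0:ℝ), |A τ * psiF τ|) ≤ ∫ τ in ρ..(0:ℝ), 4*CA*Real.exp (-τ) := by
      apply intervalIntegral.integral_mono_on hρ' (habs ρ 0) hexp
      intro x hx
      calc |A x * psiF x| ≤ 4*CA*Real.exp |x| := hbnd x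
        _ ≤ 4*CA*Real.exp (-x) := by
          rcases abs_cases x with ⟨h, hx0⟩ | ⟨h, _⟩
          · have hxz : x = 0 := le_antisymm hx.2 hx0
            rw [h, hxz]; norm_num
          · rw [h]
    have h3 : (∫ τ in ρ..(0:ℝ), 4*CA*Real.exp (-τ)) ≤ 4*CA*Real.exp (-ρ) := by
      have : (∫ τ in ρ..(0:ℝ), 4*CA*Real.exp (-τ)) = 4*CA * ∫ τ in ρ..(0:ℝ), Real.exp (-1*τ) := by
        rw [intervalIntegral.integral_const_mul]
        congr 1
        apply intervalIntegral.integral_congr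
        intro x _
        norm_num
      rw [this, int_exp_mul (-1) ρ 0 (by norm_num)]
      have h5 : Real.exp (-1*ρ) = Real.exp (-ρ) := by norm_num
      have h6 : Real.exp (-1*0) = 1 := by norm_num
      rw [h5, h6]
      have := Real.exp_pos (-ρ)
      have he2 : 4*CA*((1 - Real.exp (-ρ))/(-1)) = 4*CA*Real.exp (-ρ) - 4*CA := by ring
      rw [he2]
      nlinarith
    rw [abs_of_neg hρ]
    linarith


lemma continuous_Vq : Continuous Vq :=
  continuous_const.mul ((continuous_const.mul (continuous_th.pow 2)).sub continuous_const)


/-- Solvability criterion for the linearized Allen–Cahn operator (Lemma A.1, fixed parameter):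
given a continuous right-hand side `A` converging exponentially (with rate `α ∈ (0,1)`) to
limits `A⁺, A⁻` at `±∞`, there exists a bounded, twice continuously differentiable solution
`w` of `w'' − f''(θ₀) w = A` on `ℝ` with `w(0) = 0` if and only if `∫_ℝ A θ₀' dρ = 0`.
Here `f''(c) = (1/2)(3c² − 1)`. -/
theorem statement7 (α C₀ : ℝ) (hα : 0 < α) (hα1 : α < 1) (hC₀ : 0 < C₀)
    (A : ℝ → ℝ) (hA : Continuous A) (Ap Am : ℝ)
    (hAp : ∀ ρ : ℝ, 0 ≤ ρ → |A ρ - Ap| ≤ C₀ * Real.exp (-α * ρ))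
    (hAm : ∀ ρ : ℝ, 0 ≤ ρ → |A (-ρ) - Am| ≤ C₀ * Real.exp (-α * ρ)) :
    (∃ w : ℝ → ℝ,
        (∃ C : ℝ, ∀ ρ : ℝ, |w ρ| ≤ C) ∧
        ContDiff ℝ 2 w ∧
        (∀ ρ : ℝ,
          deriv (deriv w) ρ - (1 / 2) * (3 * (optimalProfile ρ) ^ 2 - 1) * w ρ = A ρ) ∧
        w 0 = 0)
    ↔ (∫ ρ : ℝ, A ρ * deriv optimalProfile ρ) = 0 := by
  have hop : optimalProfile = th := by
    funext ρ
    exact Real.tanh_eq_sinh_div_cosh (ρ/2)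
  have hderiv_op : deriv optimalProfile = phiF := by
    funext ρ
    rw [hop]
    exact (hasDerivAt_th ρ).deriv
  -- A is bounded
  set CA : ℝ := |Ap| + |Am| + C₀ with hCAdef
  have hCA : ∀ ρ, |A ρ| ≤ CA := by
    intro ρ
    rcases le_or_gt 0 ρ with hρ | hρ
    · have h1 := hAp ρ hρ
      have h2 : Real.exp (-α * ρ) ≤ 1 := by
        rw [Real.exp_le_one_iff]
        nlinarith
      calc |A ρ| ≤ |A ρ - Ap| + |Ap| := by
            have := abs_add_le (A ρ - Ap) Ap; simpa using this
        _ ≤ C₀ * 1 + |Ap| := by nlinarith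
        _ ≤ CA := by rw [hCAdef]; have := abs_nonneg Am; linarith
    · have hρ' : (0:ℝ) ≤ -ρ := by linarith
      have h1 := hAm (-ρ) hρ'
      rw [neg_neg] at h1
      have h2 : Real.exp (-α * -ρ) ≤ 1 := by
        rw [Real.exp_le_one_iff]
        nlinarith
      calc |A ρ| ≤ |A ρ - Am| + |Am| := by
            have := abs_add_le (A ρ - Am) Am; simpa using this
        _ ≤ C₀ * 1 + |Am| := by nlinarith
        _ ≤ CA := by rw [hCAdef]; have := abs_nonneg Ap; linarith
  have hCA0 : (0:ℝ) ≤ CA := le_trans (abs_nonneg _) (hCA 0)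
  have hΦcont : Continuous (fun ρ => A ρ * phiF ρ) := hA.mul continuous_phiF
  have hΦint : Integrable (fun ρ => A ρ * phiF ρ) := integrable_mul_phiF hA hCA
  rw [hderiv_op]
  constructor
  · rintro ⟨w, ⟨C, hC⟩, hw2, hode, -⟩
    have hC0 : 0 ≤ C := le_trans (abs_nonneg _) (hC 0)
    rw [show (2 : WithTop ℕ∞) = 1 + 1 by norm_num] at hw2
    obtain ⟨hwdiff, -, hderiv1⟩ := contDiff_succ_iff_deriv.mp hw2
    have hdw_diff : Differentiable ℝ (deriv w) := hderiv1.differentiable one_ne_zero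
    have hw_cont : Continuous w := hwdiff.continuous
    have hode' : ∀ ρ, deriv (deriv w) ρ = Vq ρ * w ρ + A ρ := by
      intro ρ
      have h := hode ρ
      rw [hop] at h
      simp only [Vq]
      linarith
    have hdd : ∀ ρ, HasDerivAt (deriv w) (Vq ρ * w ρ + A ρ) ρ := by
      intro ρ
      have h := (hdw_diff ρ).hasDerivAt
      rwa [hode' ρ] at h
    have hcont2 : Continuous (fun ρ => Vq ρ * w ρ + A ρ) :=
      (continuous_Vq.mul hw_cont).add hA
    have hM : ∀ ρ, |Vq ρ * w ρ + A ρ| ≤ C + CA := by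
      intro ρ
      calc |Vq ρ * w ρ + A ρ| ≤ |Vq ρ| * |w ρ| + |A ρ| := by
            rw [← abs_mul]; exact abs_add_le _ _
        _ ≤ 1 * C + CA := by
            have h1 := abs_Vq_le ρ
            have h2 := hC ρ
            have h3 := hCA ρ
            have h4 := abs_nonneg (w ρ)
            have h5 := abs_nonneg (Vq ρ)
            nlinarith
        _ = C + CA := by ring
    have hdw_bound : ∀ x, |deriv w x| ≤ 3*C + CA := by
      intro x
      obtain ⟨ξ, hξ, hslope⟩ := exists_deriv_eq_slope w (lt_add_one x)
        hw_cont.continuousOn hwdiff.differentiableOn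
      have hint : ∫ τ in x..ξ, (Vq τ * w τ + A τ) = deriv w ξ - deriv w x :=
        intervalIntegral.integral_eq_sub_of_hasDerivAt (fun τ _ => hdd τ)
          (hcont2.intervalIntegrable x ξ)
      have hslope' : deriv w ξ = w (x+1) - w x := by
        rw [hslope]; norm_num
      have hbint : |∫ τ in x..ξ, (Vq τ * w τ + A τ)| ≤ (C + CA) * |ξ - x| := by
        rw [← Real.norm_eq_abs]
        apply intervalIntegral.norm_integral_le_of_norm_le_const
        intro y _
        rw [Real.norm_eq_abs]
        exact hM y
      have hξx : |ξ - x| ≤ 1 := by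
        rw [abs_of_pos (by linarith [hξ.1] : (0:ℝ) < ξ - x)]
        linarith [hξ.2]
      have h6 : |deriv w ξ - deriv w x| ≤ C + CA := by
        rw [← hint]
        calc |∫ τ in x..ξ, (Vq τ * w τ + A τ)| ≤ (C + CA) * |ξ - x| := hbint
          _ ≤ (C + CA) * 1 := by nlinarith [hCA0]
          _ = C + CA := by ring
      have h7 : |deriv w ξ| ≤ 2*C := by
        rw [hslope']
        calc |w (x+1) - w x| ≤ |w (x+1)| + |w x| := abs_sub _ _
          _ ≤ 2*C := by linarith [hC (x+1), hC x]
      calc |deriv w x| = |deriv w ξ - (deriv w ξ - deriv w x)| := by ring_nf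
        _ ≤ |deriv w ξ| + |deriv w ξ - deriv w x| := abs_sub _ _
        _ ≤ 3*C + CA := by linarith
    -- the conserved quantity
    have hP : ∀ ρ, HasDerivAt (fun ρ => deriv w ρ * phiF ρ + w ρ * (th ρ * phiF ρ))
        (A ρ * phiF ρ) ρ := by
      intro ρ
      have h3 : HasDerivAt (fun x => th x * phiF x) (-(Vq ρ * phiF ρ)) ρ := by
        have := (hasDerivAt_negThPhi ρ).neg
        simpa [Pi.neg_def] using this
      have h1 := (hdd ρ).mul (hasDerivAt_phiF ρ)
      have h2 := ((hwdiff ρ).hasDerivAt).mul h3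
      have h := h1.add h2
      refine h.congr_deriv (Eq.symm ?_)
      ring
    have key : ∀ R : ℝ, (∫ ρ in (-R)..R, A ρ * phiF ρ) =
        (deriv w R * phiF R + w R * (th R * phiF R)) -
        (deriv w (-R) * phiF (-R) + w (-R) * (th (-R) * phiF (-R))) := by
      intro R
      exact intervalIntegral.integral_eq_sub_of_hasDerivAt (fun τ _ => hP τ)
        (hΦcont.intervalIntegrable _ _)
    have hPbound : ∀ ρ, |deriv w ρ * phiF ρ + w ρ * (th ρ * phiF ρ)| ≤
        (4*C + CA) * (2 * Real.exp (-|ρ|)) := by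
      intro ρ
      have hφpos := phiF_pos ρ
      have hφle := phiF_le ρ
      have ht := abs_th_le ρ
      have h1 := hdw_bound ρ
      have h2 := hC ρ
      calc |deriv w ρ * phiF ρ + w ρ * (th ρ * phiF ρ)|
          ≤ |deriv w ρ * phiF ρ| + |w ρ * (th ρ * phiF ρ)| := abs_add_le _ _
        _ = |deriv w ρ| * phiF ρ + |w ρ| * (|th ρ| * phiF ρ) := by
            rw [abs_mul, abs_mul, abs_mul, abs_of_pos hφpos]
        _ ≤ (3*C + CA) * phiF ρ + C * (1 * phiF ρ) := by
            have e1 : |deriv w ρ| * phiF ρ ≤ (3*C + CA) * phiF ρ :=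
              mul_le_mul_of_nonneg_right h1 hφpos.le
            have e2 : |th ρ| * phiF ρ ≤ 1 * phiF ρ :=
              mul_le_mul_of_nonneg_right ht hφpos.le
            have e3 : |w ρ| * (|th ρ| * phiF ρ) ≤ C * (1 * phiF ρ) :=
              mul_le_mul h2 e2 (by positivity) hC0
            linarith
        _ = (4*C + CA) * phiF ρ := by ring
        _ ≤ (4*C + CA) * (2 * Real.exp (-|ρ|)) := by
            apply mul_le_mul_of_nonneg_left hφle (by linarith)
    have h1 : Filter.Tendsto (fun R : ℝ => ∫ ρ in (-R)..R, A ρ * phiF ρ)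
        Filter.atTop (nhds (∫ ρ, A ρ * phiF ρ)) :=
      MeasureTheory.intervalIntegral_tendsto_integral hΦint
        Filter.tendsto_neg_atTop_atBot Filter.tendsto_id
    have h2 : Filter.Tendsto (fun R : ℝ => ∫ ρ in (-R)..R, A ρ * phiF ρ)
        Filter.atTop (nhds 0) := by
      simp only [key]
      have hb : Filter.Tendsto (fun R : ℝ => 4 * ((4*C + CA) * Real.exp (-R)))
          Filter.atTop (nhds 0) := by
        have := Real.tendsto_exp_neg_atTop_nhds_zero.const_mul (4 * (4*C + CA))
        simpa [mul_assoc] using this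
      apply squeeze_zero_norm' _ hb
      filter_upwards [Filter.eventually_ge_atTop (0:ℝ)] with R hR
      have hb1 := hPbound R
      have hb2 := hPbound (-R)
      rw [abs_of_nonneg hR] at hb1
      rw [abs_neg, abs_of_nonneg hR] at hb2
      rw [Real.norm_eq_abs]
      calc |(deriv w R * phiF R + w R * (th R * phiF R)) -
          (deriv w (-R) * phiF (-R) + w (-R) * (th (-R) * phiF (-R)))|
          ≤ |deriv w R * phiF R + w R * (th R * phiF R)| +
            |deriv w (-R) * phiF (-R) + w (-R) * (th (-R) * phiF (-R))| := abs_sub _ _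
        _ ≤ 4 * ((4*C + CA) * Real.exp (-R)) := by linarith
    exact tendsto_nhds_unique h1 h2
  · intro hT
    set cp : ℝ := ∫ τ in Set.Ioi (0:ℝ), A τ * phiF τ with hcp
    set F : ℝ → ℝ := fun ρ => cp - ∫ τ in (0:ℝ)..ρ, A τ * phiF τ with hFdef
    set G : ℝ → ℝ := fun ρ => ∫ τ in (0:ℝ)..ρ, A τ * psiF τ with hGdef
    set w : ℝ → ℝ := fun ρ => -(psiF ρ * F ρ) - phiF ρ * G ρ with hwdef
    set wd : ℝ → ℝ := fun ρ => -(psid ρ * F ρ) + th ρ * phiF ρ * G ρ with hwddef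
    have hFd : ∀ ρ, HasDerivAt F (-(A ρ * phiF ρ)) ρ := by
      intro ρ
      exact HasDerivAt.const_sub cp (hΦcont.integral_hasStrictDerivAt 0 ρ).hasDerivAt
    have hGd : ∀ ρ, HasDerivAt G (A ρ * psiF ρ) ρ := fun ρ =>
      ((hA.mul continuous_psiF).integral_hasStrictDerivAt 0 ρ).hasDerivAt
    have hWd : ∀ ρ, HasDerivAt w (wd ρ) ρ := by
      intro ρ
      have h1 := ((hasDerivAt_psiF ρ).mul (hFd ρ)).neg
      have h2 := (hasDerivAt_phiF ρ).mul (hGd ρ)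
      have h := h1.sub h2
      refine h.congr_deriv (Eq.symm ?_)
      simp only [hwddef]
      ring
    have hWdd : ∀ ρ, HasDerivAt wd (Vq ρ * w ρ + A ρ) ρ := by
      intro ρ
      have h3 : HasDerivAt (fun x => th x * phiF x) (-(Vq ρ * phiF ρ)) ρ := by
        simpa [Pi.neg_def] using (hasDerivAt_negThPhi ρ).neg
      have h1 := ((hasDerivAt_psid ρ).mul (hFd ρ)).neg
      have h2 := h3.mul (hGd ρ)
      have h := h1.add h2
      refine h.congr_deriv (Eq.symm ?_)
      have hwr := wronskian ρ
      simp only [hwdef]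
      linear_combination (-(A ρ)) * hwr
    have hderivw : deriv w = wd := funext fun ρ => (hWd ρ).deriv
    have hw_cont : Continuous w :=
      continuous_iff_continuousAt.mpr fun x => (hWd x).continuousAt
    have hsplit : ∀ ρ : ℝ, (∫ τ in Set.Iic ρ, A τ * phiF τ) +
        (∫ τ in Set.Ioi ρ, A τ * phiF τ) = 0 := by
      intro ρ
      rw [intervalIntegral.integral_Iic_add_Ioi hΦint.integrableOn hΦint.integrableOn]
      exact hT
    have hFrep : ∀ ρ, F ρ = ∫ τ in Set.Ioi ρ, A τ * phiF τ := by
      intro ρ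
      have hIic_sub : (∫ τ in (0:ℝ)..ρ, A τ * phiF τ) =
          (∫ τ in Set.Iic ρ, A τ * phiF τ) - ∫ τ in Set.Iic 0, A τ * phiF τ :=
        (intervalIntegral.integral_Iic_sub_Iic hΦint.integrableOn hΦint.integrableOn).symm
      simp only [hFdef, hcp]
      rw [hIic_sub]
      have h1 := hsplit ρ
      have h2 := hsplit 0
      linarith
    have hFb : ∀ ρ, |F ρ| ≤ 2*CA * Real.exp (-|ρ|) := by
      intro ρ
      rcases le_or_gt 0 ρ with hρ | hρ
      · rw [hFrep ρ, abs_of_nonneg hρ]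
        exact tail_bound_Ioi hA hCA hρ
      · have hρ' : ρ ≤ 0 := hρ.le
        have hrep : F ρ = -∫ τ in Set.Iic ρ, A τ * phiF τ := by
          rw [hFrep ρ]; linarith [hsplit ρ]
        rw [hrep, abs_neg, abs_of_nonpos hρ', neg_neg]
        exact tail_bound_Iic hA hCA hρ'
    have hGb : ∀ ρ, |G ρ| ≤ 4*CA * Real.exp |ρ| := fun ρ => G_bound hA hCA ρ
    refine ⟨w, ⟨16*CA, ?_⟩, ?_, ?_, ?_⟩
    · intro ρ
      have hψ := abs_psiF_le ρ
      have hφ := phiF_le ρ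
      have hφ0 := phiF_pos ρ
      have hF := hFb ρ
      have hG := hGb ρ
      have hee : Real.exp |ρ| * Real.exp (-|ρ|) = 1 := by
        rw [← Real.exp_add]; simp
      calc |w ρ| ≤ |psiF ρ| * |F ρ| + phiF ρ * |G ρ| := by
            simp only [hwdef]
            have h := abs_sub (-(psiF ρ * F ρ)) (phiF ρ * G ρ)
            rw [abs_neg, abs_mul, abs_mul, abs_of_pos hφ0] at h
            exact h
        _ ≤ (4*Real.exp |ρ|) * (2*CA*Real.exp (-|ρ|)) +
            (2*Real.exp (-|ρ|)) * (4*CA*Real.exp |ρ|) := by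
            have e1 : |psiF ρ| * |F ρ| ≤ (4*Real.exp |ρ|) * (2*CA*Real.exp (-|ρ|)) :=
              mul_le_mul hψ hF (abs_nonneg _) (by positivity)
            have e2 : phiF ρ * |G ρ| ≤ (2*Real.exp (-|ρ|)) * (4*CA*Real.exp |ρ|) :=
              mul_le_mul hφ hG (abs_nonneg _) (by positivity)
            linarith
        _ = 16*CA := by linear_combination (16*CA) * hee
    · rw [show (2 : WithTop ℕ∞) = 1 + 1 by norm_num]
      apply contDiff_succ_iff_deriv.mpr
      refine ⟨fun x => (hWd x).differentiableAt, by simp, ?_⟩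
      apply contDiff_one_iff_deriv.mpr
      rw [hderivw]
      refine ⟨fun x => (hWdd x).differentiableAt, ?_⟩
      have hdwd : deriv wd = fun ρ => Vq ρ * w ρ + A ρ := funext fun ρ => (hWdd ρ).deriv
      rw [hdwd]
      exact (continuous_Vq.mul hw_cont).add hA
    · intro ρ
      have e1 : deriv (deriv w) ρ = Vq ρ * w ρ + A ρ := by
        rw [hderivw]; exact (hWdd ρ).deriv
      rw [e1, hop]
      simp only [Vq]
      ring
    · simp only [hwdef, hGdef]
      rw [psiF_zero]
      simp
end

section
/- Let 0 < m ≤ M, let a : ℝ → ℝ be continuously differentiable with m ≤ a(ρ) ≤ M for all ρ, and let B : ℝ → ℝ be continuous with |B(ρ)| ≤ C₀ e^{−α|ρ|} for all ρ ∈ ℝ, for some α, C₀ > 0. Then there exists a bounded, twice continuously differentiable function w : ℝ → ℝ satisfying (a(ρ) w'(ρ))' = B(ρ) for all ρ ∈ ℝ if and only if ∫_ℝ B(ρ) dρ = 0. -/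
open MeasureTheory

open Set Filter Topology intervalIntegral Real in
private lemma my_integrable_exp_neg_mul_abs {α : ℝ} (hα : 0 < α) :
    Integrable (fun x : ℝ => Real.exp (-α * |x|)) := by
  have hIoi : IntegrableOn (fun x : ℝ => Real.exp (-α * |x|)) (Set.Ioi 0) := by
    refine (exp_neg_integrableOn_Ioi 0 hα).congr_fun ?_ measurableSet_Ioi
    intro x hx
    show Real.exp (-α * x) = Real.exp (-α * |x|)
    rw [abs_of_pos hx]
  have hIic : IntegrableOn (fun x : ℝ => Real.exp (-α * |x|)) (Set.Iic 0) := by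
    have m : MeasurableEmbedding fun x : ℝ => -x :=
      (Homeomorph.neg ℝ).measurableEmbedding
    rw [← Measure.map_neg_eq_self (volume : Measure ℝ), m.integrableOn_map_iff]
    simp_rw [Function.comp_def, abs_neg, Set.neg_preimage, Set.neg_Iic, neg_zero]
    exact Iff.mpr integrableOn_Ici_iff_integrableOn_Ioi hIoi
  have := hIic.union hIoi
  rwa [Set.Iic_union_Ioi, integrableOn_univ] at this

open Set Filter Topology intervalIntegral Real in
/-- A bounded differentiable function cannot have derivative eventually bounded below
by a positive constant. -/
private lemma my_no_escape {w v : ℝ → ℝ} {C c R₀ : ℝ}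
    (hw : ∀ ρ, |w ρ| ≤ C) (hv : Continuous v)
    (hwd : ∀ ρ, HasDerivAt w (v ρ) ρ) (hc : 0 < c)
    (hbig : ∀ ρ, R₀ ≤ ρ → c ≤ v ρ) : False := by
  have hC : 0 ≤ C := (abs_nonneg _).trans (hw 0)
  set R : ℝ := R₀ + (2 * C + 1) / c with hRdef
  have hRR : R₀ ≤ R := by
    have h : 0 ≤ (2 * C + 1) / c := by positivity
    rw [hRdef]
    exact le_add_of_nonneg_right h
  have hFTC : ∫ x in R₀..R, v x = w R - w R₀ :=
    intervalIntegral.integral_eq_sub_of_hasDerivAt (fun x _ => hwd x)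
      (hv.intervalIntegrable _ _)
  have hmono : (∫ x in R₀..R, (c : ℝ)) ≤ ∫ x in R₀..R, v x := by
    apply intervalIntegral.integral_mono_on hRR
      (intervalIntegrable_const) (hv.intervalIntegrable _ _)
    intro x hx
    exact hbig x hx.1
  have hconst : (∫ x in R₀..R, (c : ℝ)) = 2 * C + 1 := by
    rw [intervalIntegral.integral_const, smul_eq_mul]
    rw [hRdef]
    field_simp
    ring
  have h1 : w R - w R₀ ≤ 2 * C := by
    have := hw R; have := hw R₀
    cases abs_le.mp (hw R) with
    | intro h h' => cases abs_le.mp (hw R₀) with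
      | intro h2 h2' => linarith
  rw [hFTC, hconst] at hmono
  linarith

open Set Filter Topology intervalIntegral Real in
/-- If `w` is bounded and `C²` and `a * w'` converges at `+∞`, the limit is zero. -/
private lemma my_limit_zero {a w : ℝ → ℝ} {m M L C : ℝ} (hm : 0 < m)
    (habdd : ∀ ρ : ℝ, m ≤ a ρ ∧ a ρ ≤ M)
    (hw : ∀ ρ, |w ρ| ≤ C) (hw2 : ContDiff ℝ 2 w)
    (hlim : Tendsto (fun ρ => a ρ * deriv w ρ) atTop (𝓝 L)) : L = 0 := by
  have hM : 0 < M := hm.trans_le ((habdd 0).1.trans (habdd 0).2)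
  have h2 : (2 : WithTop ℕ∞) = 1 + 1 := by norm_num
  have hdw : ContDiff ℝ 1 (deriv w) := by
    rw [h2, contDiff_succ_iff_deriv] at hw2
    exact hw2.2.2
  have hwd : ∀ ρ, HasDerivAt w (deriv w ρ) ρ := fun ρ =>
    ((hw2.differentiable (by norm_num)) ρ).hasDerivAt
  by_contra hL
  rcases lt_or_gt_of_ne hL with hneg | hpos
  · -- L < 0
    have hev : ∀ᶠ ρ in atTop, a ρ * deriv w ρ < L / 2 :=
      hlim.eventually (eventually_lt_nhds (by linarith))
    obtain ⟨R₀, hR₀⟩ := eventually_atTop.mp hev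
    refine my_no_escape (R₀ := R₀) (w := fun ρ => -w ρ) (v := fun ρ => -deriv w ρ)
      (C := C) (c := -L / (2 * M)) (fun ρ => by simpa using hw ρ)
      hdw.continuous.neg (fun ρ => (hwd ρ).neg)
      (div_pos (by linarith) (by positivity)) ?_
    intro ρ hρ
    have h3 := hR₀ ρ hρ
    have ha1 := (habdd ρ).1
    have ha2 := (habdd ρ).2
    have hva : deriv w ρ < 0 := by nlinarith
    show -L / (2 * M) ≤ -deriv w ρ
    rw [div_le_iff₀ (by positivity)]
    nlinarith [mul_nonneg (sub_nonneg.mpr ha2) (neg_nonneg.mpr hva.le)]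
  · -- L > 0
    have hev : ∀ᶠ ρ in atTop, L / 2 < a ρ * deriv w ρ :=
      hlim.eventually (eventually_gt_nhds (by linarith))
    obtain ⟨R₀, hR₀⟩ := eventually_atTop.mp hev
    refine my_no_escape (R₀ := R₀) (w := w) (v := deriv w)
      (C := C) (c := L / (2 * M)) hw hdw.continuous hwd (by positivity) ?_
    intro ρ hρ
    have h3 := hR₀ ρ hρ
    have ha1 := (habdd ρ).1
    have ha2 := (habdd ρ).2
    have hva : 0 < deriv w ρ := by nlinarith
    rw [div_le_iff₀ (by positivity)]
    nlinarith

open Set Filter Topology intervalIntegral Real in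
/-- Solvability criterion (Lemma A.2 of the paper, fixed parameter): for a continuously
differentiable coefficient `a` with `0 < m ≤ a ≤ M` and a continuous right-hand side `B`
decaying exponentially, there exists a bounded, twice continuously differentiable solution
`w` of `(a w')' = B` on `ℝ` if and only if `∫_ℝ B dρ = 0`. -/
theorem statement9 (m M α C₀ : ℝ) (hm : 0 < m) (hmM : m ≤ M) (hα : 0 < α) (hC₀ : 0 < C₀)
    (a : ℝ → ℝ) (ha : ContDiff ℝ 1 a) (habdd : ∀ ρ : ℝ, m ≤ a ρ ∧ a ρ ≤ M)
    (B : ℝ → ℝ) (hB : Continuous B)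
    (hBdecay : ∀ ρ : ℝ, |B ρ| ≤ C₀ * Real.exp (-α * |ρ|)) :
    (∃ w : ℝ → ℝ,
        (∃ C : ℝ, ∀ ρ : ℝ, |w ρ| ≤ C) ∧
        ContDiff ℝ 2 w ∧
        (∀ ρ : ℝ, deriv (fun r => a r * deriv w r) ρ = B ρ))
    ↔ (∫ ρ : ℝ, B ρ) = 0 := by
  have hane : ∀ ρ, a ρ ≠ 0 := fun ρ => (hm.trans_le (habdd ρ).1).ne'
  have hInt : Integrable B := by
    refine Integrable.mono' ((my_integrable_exp_neg_mul_abs hα).const_mul C₀)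
      hB.aestronglyMeasurable (ae_of_all _ fun ρ => ?_)
    simpa [Real.norm_eq_abs] using hBdecay ρ
  have h2 : (2 : WithTop ℕ∞) = 1 + 1 := by norm_num
  constructor
  · rintro ⟨w, ⟨C, hwC⟩, hw2, heq⟩
    set f : ℝ → ℝ := fun ρ => a ρ * deriv w ρ with hfdef
    have hdw : ContDiff ℝ 1 (deriv w) := by
      rw [h2, contDiff_succ_iff_deriv] at hw2
      exact hw2.2.2
    have hf1 : ContDiff ℝ 1 f := ha.mul hdw
    have hF : ∀ ρ, HasDerivAt f (B ρ) ρ := by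
      intro ρ
      have := ((hf1.differentiable one_ne_zero) ρ).hasDerivAt
      rwa [show deriv f ρ = B ρ from heq ρ] at this
    have hFTC : ∀ R : ℝ, ∫ x in (0:ℝ)..R, B x = f R - f 0 := fun R =>
      intervalIntegral.integral_eq_sub_of_hasDerivAt (fun x _ => hF x)
        (hB.intervalIntegrable _ _)
    -- limit at +∞
    have htop : Tendsto f atTop (𝓝 ((∫ x in Set.Ioi (0:ℝ), B x) + f 0)) := by
      have t := intervalIntegral_tendsto_integral_Ioi 0 hInt.integrableOn
        (tendsto_id (α := ℝ))
      have : Tendsto (fun R => f R - f 0) atTop (𝓝 (∫ x in Set.Ioi (0:ℝ), B x)) := by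
        refine t.congr fun R => ?_
        exact hFTC R
      have := this.add_const (f 0)
      simpa using this
    have hLtop : (∫ x in Set.Ioi (0:ℝ), B x) + f 0 = 0 :=
      my_limit_zero hm habdd hwC hw2 htop
    -- limit at -∞
    have hbot : Tendsto f atBot (𝓝 (f 0 - ∫ x in Set.Iic (0:ℝ), B x)) := by
      have t := intervalIntegral_tendsto_integral_Iic 0 hInt.integrableOn
        (tendsto_id (α := ℝ))
      -- t : Tendsto (fun R => ∫ x in R..0, B x) atBot (𝓝 ∫ Iic 0)
      have t2 : Tendsto (fun R => f 0 - f R) atBot (𝓝 (∫ x in Set.Iic (0:ℝ), B x)) := by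
        refine t.congr fun R => ?_
        simp only [id]
        rw [intervalIntegral.integral_symm, hFTC R]
        ring
      have := t2.const_sub (f 0)
      simpa using this
    -- reflect to apply my_limit_zero at -∞
    have hLbot : f 0 - (∫ x in Set.Iic (0:ℝ), B x) = 0 := by
      set wr : ℝ → ℝ := fun ρ => w (-ρ) with hwr
      set ar : ℝ → ℝ := fun ρ => a (-ρ) with har
      have hwd : ∀ ρ, HasDerivAt w (deriv w ρ) ρ := fun ρ =>
        ((hw2.differentiable (by norm_num)) ρ).hasDerivAt
      have hwrd : ∀ ρ, HasDerivAt wr (-(deriv w (-ρ))) ρ := by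
        intro ρ
        have := (hwd (-ρ)).comp ρ (hasDerivAt_neg ρ)
        simpa [wr, mul_comm, Function.comp_def] using this
      have hdwr : ∀ ρ, deriv wr ρ = -(deriv w (-ρ)) := fun ρ => (hwrd ρ).deriv
      have hwr2 : ContDiff ℝ 2 wr := hw2.comp (contDiff_neg)
      have hlim2 : Tendsto (fun ρ => ar ρ * deriv wr ρ) atTop
          (𝓝 (-(f 0 - ∫ x in Set.Iic (0:ℝ), B x))) := by
        have h1 : Tendsto (fun ρ : ℝ => f (-ρ)) atTop
            (𝓝 (f 0 - ∫ x in Set.Iic (0:ℝ), B x)) :=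
          hbot.comp tendsto_neg_atTop_atBot
        have := h1.neg
        refine this.congr fun ρ => ?_
        simp only [ar, hdwr, hfdef]
        ring
      have := my_limit_zero (M := M) hm (fun ρ => habdd (-ρ))
        (fun ρ => hwC (-ρ)) hwr2 hlim2
      linarith [this]
    have hsplit : (∫ x in Set.Iic (0:ℝ), B x) + (∫ x in Set.Ioi (0:ℝ), B x)
        = ∫ x : ℝ, B x :=
      integral_Iic_add_Ioi hInt.integrableOn hInt.integrableOn
    rw [← hsplit]
    linarith
  · intro hB0
    -- construct the solution
    set g : ℝ → ℝ := fun ρ => ∫ x in Set.Iic ρ, B x with hgdef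
    have hg_eq : ∀ ρ, g ρ = (∫ x in Set.Iic (0:ℝ), B x) + ∫ x in (0:ℝ)..ρ, B x := by
      intro ρ
      rw [← integral_Iic_sub_Iic hInt.integrableOn hInt.integrableOn]
      ring
    have hgd : ∀ ρ, HasDerivAt g (B ρ) ρ := by
      intro ρ
      have h1 : HasDerivAt (fun r => (∫ x in Set.Iic (0:ℝ), B x) + ∫ x in (0:ℝ)..r, B x)
          (B ρ) ρ := by
        refine HasDerivAt.const_add _ ?_
        exact intervalIntegral.integral_hasDerivAt_right (hB.intervalIntegrable _ _)
          (hB.stronglyMeasurableAtFilter _ _) hB.continuousAt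
      refine h1.congr_of_eventuallyEq (Filter.Eventually.of_forall fun r => (hg_eq r))
    -- exponential bound on g
    have hg_bound : ∀ ρ, |g ρ| ≤ (C₀ / α) * Real.exp (-α * |ρ|) := by
      intro ρ
      rcases le_or_gt ρ 0 with hρ | hρ
      · -- ρ ≤ 0 : g ρ = ∫_{Iic ρ} B
        have hsub : Set.Iic ρ ⊆ Set.Iic (0:ℝ) := Set.Iic_subset_Iic.mpr hρ
        have hIexp : ∀ x ∈ Set.Iic ρ, Real.exp (-α * |x|) = Real.exp (α * x) := by
          intro x hx
          have : x ≤ 0 := le_trans hx hρ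
          rw [abs_of_nonpos this]; ring_nf
        have hintexp : ∫ x in Set.Iic ρ, Real.exp (α * x) = Real.exp (α * ρ) / α := by
          have hd : ∀ x ∈ Set.Iio ρ, HasDerivAt (fun y => Real.exp (α * y) / α)
              (Real.exp (α * x)) x := by
            intro x _
            have : HasDerivAt (fun y => Real.exp (α * y)) (Real.exp (α * x) * α) x := by
              have h1 : HasDerivAt (fun y : ℝ => α * y) α x := by
                simpa using (hasDerivAt_id x).const_mul α
              exact h1.exp
            have := this.div_const α
            rwa [mul_div_cancel_right₀ _ hα.ne'] at this
          have hi : IntegrableOn (fun x => Real.exp (α * x)) (Set.Iic ρ) := by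
            refine (((my_integrable_exp_neg_mul_abs hα).integrableOn).mono_set hsub).congr_fun
              ?_ measurableSet_Iic
            intro x hx
            exact (hIexp x hx)
          have ht : Tendsto (fun y => Real.exp (α * y) / α) atBot (𝓝 0) := by
            have : Tendsto (fun y : ℝ => α * y) atBot atBot :=
              tendsto_id.const_mul_atBot hα
            have := Real.tendsto_exp_atBot.comp this
            simpa using this.div_const α
          have := integral_Iic_of_hasDerivAt_of_tendsto
            (f := fun y => Real.exp (α * y) / α) (f' := fun x => Real.exp (α * x))
            (((Real.continuous_exp.comp (continuous_const.mul continuous_id)).div_const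
              α).continuousWithinAt) hd hi ht
          simpa using this
        calc |g ρ| ≤ ∫ x in Set.Iic ρ, |B x| := by
              simpa [Real.norm_eq_abs] using
                norm_integral_le_integral_norm (μ := volume.restrict (Set.Iic ρ)) B
          _ ≤ ∫ x in Set.Iic ρ, C₀ * Real.exp (α * x) := by
              refine setIntegral_mono_on (hInt.abs.integrableOn) ?_ measurableSet_Iic ?_
              · refine ((((my_integrable_exp_neg_mul_abs hα).const_mul
                  C₀).integrableOn.mono_set hsub).congr_fun ?_ measurableSet_Iic)
                intro x hx
                show C₀ * Real.exp (-α * |x|) = C₀ * Real.exp (α * x)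
                rw [hIexp x hx]
              · intro x hx
                have h1 := hBdecay x
                have h2 : Real.exp (-α * |x|) = Real.exp (α * x) := hIexp x hx
                rw [← h2]; exact h1
          _ = C₀ * (Real.exp (α * ρ) / α) := by
              rw [MeasureTheory.integral_const_mul, hintexp]
          _ = (C₀ / α) * Real.exp (-α * |ρ|) := by
              rw [abs_of_nonpos hρ]
              ring_nf
      · -- ρ > 0 : g ρ = -∫_{Ioi ρ} B
        have hgneg : g ρ = -∫ x in Set.Ioi ρ, B x := by
          have := integral_Iic_add_Ioi (b := ρ) hInt.integrableOn hInt.integrableOn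
          rw [hB0] at this
          simp only [hgdef]
          linarith
        have hIexp : ∀ x ∈ Set.Ioi ρ, Real.exp (-α * |x|) = Real.exp (-α * x) := by
          intro x hx
          have : (0:ℝ) < x := hρ.trans hx
          rw [abs_of_pos this]
        have hintexp : ∫ x in Set.Ioi ρ, Real.exp (-α * x) = Real.exp (-α * ρ) / α := by
          have hd : ∀ x ∈ Set.Ioi ρ, HasDerivAt (fun y => -Real.exp (-α * y) / α)
              (Real.exp (-α * x)) x := by
            intro x _
            have h1 : HasDerivAt (fun y : ℝ => -α * y) (-α) x := by
              simpa using (hasDerivAt_id x).const_mul (-α)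
            have := ((h1.exp).neg).div_const α
            have h3 : -(Real.exp (-α * x) * -α) / α = Real.exp (-α * x) := by
              field_simp
            rwa [h3] at this
          have hi : IntegrableOn (fun x => Real.exp (-α * x)) (Set.Ioi ρ) :=
            exp_neg_integrableOn_Ioi ρ hα
          have ht : Tendsto (fun y => -Real.exp (-α * y) / α) atTop (𝓝 0) := by
            have h1 : Tendsto (fun y : ℝ => α * y) atTop atTop :=
              tendsto_id.const_mul_atTop hα
            have h2 : Tendsto (fun y : ℝ => -α * y) atTop atBot := by
              have := tendsto_neg_atTop_atBot.comp h1
              refine this.congr fun y => ?_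
              simp [neg_mul]
            have := (Real.tendsto_exp_atBot.comp h2).neg.div_const α
            simpa using this
          have := integral_Ioi_of_hasDerivAt_of_tendsto
            (f := fun y => -Real.exp (-α * y) / α) (f' := fun x => Real.exp (-α * x))
            ((((Real.continuous_exp.comp
              (continuous_const.mul continuous_id)).neg).div_const α).continuousWithinAt)
            hd hi ht
          rw [this]
          field_simp
          ring
        rw [hgneg, abs_neg]
        calc |∫ x in Set.Ioi ρ, B x| ≤ ∫ x in Set.Ioi ρ, |B x| := by
              simpa [Real.norm_eq_abs] using
                norm_integral_le_integral_norm (μ := volume.restrict (Set.Ioi ρ)) B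
          _ ≤ ∫ x in Set.Ioi ρ, C₀ * Real.exp (-α * x) := by
              refine setIntegral_mono_on (hInt.abs.integrableOn) ?_ measurableSet_Ioi ?_
              · exact ((exp_neg_integrableOn_Ioi ρ hα).const_mul C₀)
              · intro x hx
                have h1 := hBdecay x
                rw [← hIexp x hx]; exact h1
          _ = C₀ * (Real.exp (-α * ρ) / α) := by
              rw [MeasureTheory.integral_const_mul, hintexp]
          _ = (C₀ / α) * Real.exp (-α * |ρ|) := by
              rw [abs_of_pos hρ]; ring
    -- g is C¹
    have hg1 : ContDiff ℝ 1 g := by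
      rw [contDiff_one_iff_deriv]
      refine ⟨fun ρ => (hgd ρ).differentiableAt, ?_⟩
      have : deriv g = B := funext fun ρ => (hgd ρ).deriv
      rw [this]; exact hB
    set v : ℝ → ℝ := fun ρ => g ρ / a ρ with hvdef
    have hv1 : ContDiff ℝ 1 v := hg1.div ha hane
    have hv_bound : ∀ ρ, |v ρ| ≤ (C₀ / (α * m)) * Real.exp (-α * |ρ|) := by
      intro ρ
      have ha1 := (habdd ρ).1
      have hapos : 0 < a ρ := hm.trans_le ha1
      have : |v ρ| = |g ρ| / a ρ := by
        rw [hvdef, abs_div, abs_of_pos hapos]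
      rw [this]
      have h1 : |g ρ| / a ρ ≤ |g ρ| / m := by
        apply div_le_div_of_nonneg_left (abs_nonneg _) hm ha1
      refine h1.trans ?_
      rw [div_le_iff₀ hm]
      have := hg_bound ρ
      calc |g ρ| ≤ (C₀ / α) * Real.exp (-α * |ρ|) := this
        _ = C₀ / (α * m) * Real.exp (-α * |ρ|) * m := by field_simp
    have hv_int : Integrable v := by
      refine Integrable.mono' ((my_integrable_exp_neg_mul_abs hα).const_mul (C₀ / (α * m)))
        hv1.continuous.aestronglyMeasurable (ae_of_all _ fun ρ => ?_)
      simpa [Real.norm_eq_abs] using hv_bound ρ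
    set w : ℝ → ℝ := fun ρ => ∫ x in (0:ℝ)..ρ, v x with hwdef
    have hwd : ∀ ρ, HasDerivAt w (v ρ) ρ := by
      intro ρ
      exact intervalIntegral.integral_hasDerivAt_right
        (hv1.continuous.intervalIntegrable _ _)
        (hv1.continuous.stronglyMeasurableAtFilter _ _) hv1.continuous.continuousAt
    have hderivw : deriv w = v := funext fun ρ => (hwd ρ).deriv
    refine ⟨w, ⟨∫ x : ℝ, |v x|, ?_⟩, ?_, ?_⟩
    · intro ρ
      have h1 : |w ρ| ≤ ∫ x in Set.uIoc 0 ρ, |v x| := by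
        simpa [Real.norm_eq_abs] using
          intervalIntegral.norm_integral_le_integral_norm_uIoc (f := v) (a := (0:ℝ)) (b := ρ)
      refine h1.trans ?_
      exact setIntegral_le_integral hv_int.abs (ae_of_all _ fun x => abs_nonneg _)
    · rw [h2, contDiff_succ_iff_deriv]
      refine ⟨fun ρ => (hwd ρ).differentiableAt, ?_, ?_⟩
      · intro h; simp at h
      · rw [hderivw]; exact hv1
    · intro ρ
      have hfun : (fun r => a r * deriv w r) = g := by
        funext r
        rw [hderivw]
        show a r * (g r / a r) = g r
        rw [mul_comm, div_mul_cancel₀ _ (hane r)]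
      rw [hfun]
      exact (hgd ρ).deriv
end

section
/- Let 0 < m ≤ M, let a : ℝ → ℝ be continuously differentiable with m ≤ a(ρ) ≤ M and |a'(ρ)| ≤ M for all ρ, and let B : ℝ → ℝ be continuous with |B(ρ)| ≤ C₀ e^{−α|ρ|} for all ρ ∈ ℝ, for some α, C₀ > 0, and assume ∫_ℝ B(ρ) dρ = 0. Let w_*(ρ) := ∫₀^ρ a(r)^{−1} (∫_{−∞}^r B(s) ds) dr. Then there exist w⁺, w⁻ ∈ ℝ and a constant C > 0 such that for all ρ ≥ 0: |w_*(ρ) − w⁺| ≤ C e^{−αρ}, |w_*(−ρ) − w⁻| ≤ C e^{−αρ}, |w_*'(ρ)| + |w_*'(−ρ)| ≤ C e^{−αρ}, and |w_*''(ρ)| + |w_*''(−ρ)| ≤ C e^{−αρ}. -/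
open MeasureTheory Set

private lemma compNegIntOn {f : ℝ → ℝ} {c : ℝ} (h : IntegrableOn f (Ioi c)) :
    IntegrableOn (fun x => f (-x)) (Iic (-c)) := by
  have A : MeasurableEmbedding fun x : ℝ => -x :=
    (Homeomorph.neg ℝ).isClosedEmbedding.measurableEmbedding
  rw [integrableOn_Iic_iff_integrableOn_Iio]
  have hpre : (fun x : ℝ => -x) ⁻¹' (Ioi c) = Iio (-c) := by
    ext x; simp [lt_neg]
  have key := A.integrable_map_iff
    (g := f) (μ := (volume : Measure ℝ).restrict ((fun x : ℝ => -x) ⁻¹' (Ioi c)))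
  rw [← Measure.restrict_map A.measurable measurableSet_Ioi, Measure.map_neg_eq_self] at key
  rw [IntegrableOn, ← hpre]
  exact key.mp h

private lemma expIoiInt {α : ℝ} (hα : 0 < α) (c : ℝ) :
    ∫ x in Ioi c, Real.exp (-α * x) = Real.exp (-α * c) / α := by
  have h := integral_comp_mul_left_Ioi (fun x => Real.exp (-x)) c hα
  rw [integral_exp_neg_Ioi, smul_eq_mul] at h
  simp only [neg_mul] at h ⊢
  rw [h]; ring

private lemma expIicInt {α : ℝ} (hα : 0 < α) (c : ℝ) :
    ∫ x in Iic c, Real.exp (α * x) = Real.exp (α * c) / α := by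
  have h := integral_comp_neg_Iic c (fun x => Real.exp (-α * x))
  rw [expIoiInt hα] at h
  simpa [neg_mul_neg] using h

private lemma expIicIntOn {α : ℝ} (hα : 0 < α) (c : ℝ) :
    IntegrableOn (fun x => Real.exp (α * x)) (Iic c) := by
  have := compNegIntOn (f := fun x => Real.exp (-α * x)) (c := -c)
    (exp_neg_integrableOn_Ioi (-c) hα)
  simpa [neg_mul_neg] using this

/-- Exponential convergence at `±∞` of the canonical bounded solution
`w_*(ρ) = ∫₀^ρ a(r)⁻¹ (∫_{−∞}^r B(s) ds) dr` of `(a w')' = B`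
(assertion (A.2-6) of Lemma A.2 of the paper, derivatives of order 0, 1, 2):
there exist limits `w⁺, w⁻` and a constant `C > 0` such that for all `ρ ≥ 0`,
`|w_*(±ρ) − w^±| ≤ C e^{−αρ}`, `|w_*'(ρ)| + |w_*'(−ρ)| ≤ C e^{−αρ}` and
`|w_*''(ρ)| + |w_*''(−ρ)| ≤ C e^{−αρ}`. -/
theorem statement11 (m M α C₀ : ℝ) (hm : 0 < m) (hmM : m ≤ M) (hα : 0 < α) (hC₀ : 0 < C₀)
    (a : ℝ → ℝ) (ha : ContDiff ℝ 1 a)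
    (habdd : ∀ ρ : ℝ, m ≤ a ρ ∧ a ρ ≤ M)
    (ha' : ∀ ρ : ℝ, |deriv a ρ| ≤ M)
    (B : ℝ → ℝ) (hB : Continuous B)
    (hBdecay : ∀ ρ : ℝ, |B ρ| ≤ C₀ * Real.exp (-α * |ρ|))
    (hcomp : (∫ ρ : ℝ, B ρ) = 0)
    (wstar : ℝ → ℝ)
    (hwstar : ∀ ρ : ℝ, wstar ρ = ∫ r in (0:ℝ)..ρ, (a r)⁻¹ * ∫ s in Set.Iic r, B s) :
    ∃ wp wm C : ℝ, 0 < C ∧ ∀ ρ : ℝ, 0 ≤ ρ →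
      |wstar ρ - wp| ≤ C * Real.exp (-α * ρ) ∧
      |wstar (-ρ) - wm| ≤ C * Real.exp (-α * ρ) ∧
      |deriv wstar ρ| + |deriv wstar (-ρ)| ≤ C * Real.exp (-α * ρ) ∧
      |deriv (deriv wstar) ρ| + |deriv (deriv wstar) (-ρ)| ≤ C * Real.exp (-α * ρ) := by
  have hapos : ∀ r, 0 < a r := fun r => lt_of_lt_of_le hm (habdd r).1
  have hane : ∀ r, a r ≠ 0 := fun r => (hapos r).ne'
  -- pointwise exponential comparisons
  have hle1 : ∀ s : ℝ, Real.exp (-α * |s|) ≤ Real.exp (α * s) := fun s =>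
    Real.exp_le_exp.mpr (by nlinarith [neg_abs_le s, abs_nonneg s])
  have hle2 : ∀ s : ℝ, Real.exp (-α * |s|) ≤ Real.exp (-α * s) := fun s =>
    Real.exp_le_exp.mpr (by nlinarith [le_abs_self s, abs_nonneg s])
  -- integrability of the envelope
  have hEnv : Integrable (fun x : ℝ => Real.exp (-α * |x|)) := by
    have h1 : IntegrableOn (fun x : ℝ => Real.exp (-α * |x|)) (Iic 0) := by
      refine (expIicIntOn hα 0).congr_fun (fun x hx => ?_) measurableSet_Iic
      rw [abs_of_nonpos hx, neg_mul_neg]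
    have h2 : IntegrableOn (fun x : ℝ => Real.exp (-α * |x|)) (Ioi 0) := by
      refine (exp_neg_integrableOn_Ioi 0 hα).congr_fun (fun x hx => ?_) measurableSet_Ioi
      rw [abs_of_pos hx]
    rw [← integrableOn_univ, ← Iic_union_Ioi (a := (0:ℝ))]
    exact h1.union h2
  -- integrability of B
  have hBint : Integrable B :=
    (hEnv.const_mul C₀).mono' hB.aestronglyMeasurable
      (Filter.Eventually.of_forall fun x => by simpa [Real.norm_eq_abs] using hBdecay x)
  -- primitive of B
  set G : ℝ → ℝ := fun r => ∫ s in Iic r, B s with hGdef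
  -- decay of G
  have hG : ∀ r : ℝ, |G r| ≤ C₀ / α * Real.exp (-α * |r|) := by
    intro r
    rcases le_total r 0 with hr | hr
    · have hb : |G r| ≤ ∫ s in Iic r, C₀ * Real.exp (α * s) := by
        rw [← Real.norm_eq_abs]
        refine norm_integral_le_of_norm_le ((expIicIntOn hα r).const_mul C₀) ?_
        refine Filter.Eventually.of_forall fun s => ?_
        rw [Real.norm_eq_abs]
        exact (hBdecay s).trans (mul_le_mul_of_nonneg_left (hle1 s) hC₀.le)
      rw [integral_const_mul, expIicInt hα r] at hb
      rw [abs_of_nonpos hr]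
      calc |G r| ≤ C₀ * (Real.exp (α * r) / α) := hb
        _ = C₀ / α * Real.exp (-α * -r) := by rw [neg_mul_neg]; ring
    · have hsplit := intervalIntegral.integral_Iic_add_Ioi (b := r) hBint.integrableOn hBint.integrableOn
      rw [hcomp] at hsplit
      have hGr : G r = -∫ s in Ioi r, B s := by
        rw [hGdef]; dsimp only; linarith
      have hb : |∫ s in Ioi r, B s| ≤ ∫ s in Ioi r, C₀ * Real.exp (-α * s) := by
        rw [← Real.norm_eq_abs]
        refine norm_integral_le_of_norm_le ((exp_neg_integrableOn_Ioi r hα).const_mul C₀) ?_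
        refine Filter.Eventually.of_forall fun s => ?_
        rw [Real.norm_eq_abs]
        exact (hBdecay s).trans (mul_le_mul_of_nonneg_left (hle2 s) hC₀.le)
      rw [integral_const_mul, expIoiInt hα r] at hb
      rw [hGr, abs_neg, abs_of_nonneg hr]
      calc |∫ s in Ioi r, B s| ≤ C₀ * (Real.exp (-α * r) / α) := hb
        _ = C₀ / α * Real.exp (-α * r) := by ring
  -- derivative of G
  have hGeq : ∀ r : ℝ, G r = (∫ s in Iic (0:ℝ), B s) + ∫ s in (0:ℝ)..r, B s := by
    intro r
    have := intervalIntegral.integral_Iic_sub_Iic (a := (0:ℝ)) (b := r)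
      hBint.integrableOn hBint.integrableOn
    rw [hGdef]; dsimp only; linarith
  have hGd : ∀ r : ℝ, HasDerivAt G (B r) r := by
    intro r
    have h := ((hB.integral_hasStrictDerivAt 0 r).hasDerivAt).const_add (∫ s in Iic (0:ℝ), B s)
    exact h.congr_of_eventuallyEq (Filter.Eventually.of_forall fun x => (hGeq x))
  have hGcont : Continuous G := continuous_iff_continuousAt.mpr fun r => (hGd r).continuousAt
  -- the derivative g of wstar
  set g : ℝ → ℝ := fun r => (a r)⁻¹ * G r with hgdef
  have hgc : Continuous g := ((ha.continuous).inv₀ hane).mul hGcont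
  have hgb : ∀ r : ℝ, |g r| ≤ C₀ / (m * α) * Real.exp (-α * |r|) := by
    intro r
    rw [hgdef]; dsimp only
    rw [abs_mul, abs_of_pos (inv_pos.mpr (hapos r))]
    have h2 : (a r)⁻¹ ≤ m⁻¹ := by
      apply inv_anti₀ hm (habdd r).1
    calc (a r)⁻¹ * |G r| ≤ m⁻¹ * (C₀ / α * Real.exp (-α * |r|)) :=
          mul_le_mul h2 (hG r) (abs_nonneg _) (inv_pos.mpr hm).le
      _ = C₀ / (m * α) * Real.exp (-α * |r|) := by field_simp
  have hgint : Integrable g :=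
    (hEnv.const_mul (C₀ / (m * α))).mono' hgc.aestronglyMeasurable
      (Filter.Eventually.of_forall fun r => by simpa [Real.norm_eq_abs] using hgb r)
  -- wstar as interval integral of g
  have hwfun : wstar = fun ρ => ∫ r in (0:ℝ)..ρ, g r := funext fun ρ => hwstar ρ
  have hwd : ∀ ρ : ℝ, HasDerivAt wstar (g ρ) ρ := by
    intro ρ
    rw [hwfun]
    exact (hgc.integral_hasStrictDerivAt 0 ρ).hasDerivAt
  have hw' : deriv wstar = g := funext fun ρ => (hwd ρ).deriv
  -- second derivative
  have hgd : ∀ ρ : ℝ, HasDerivAt g (-(deriv a ρ) / (a ρ) ^ 2 * G ρ + (a ρ)⁻¹ * B ρ) ρ := by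
    intro ρ
    have hA : HasDerivAt a (deriv a ρ) ρ := (ha.differentiable one_ne_zero ρ).hasDerivAt
    exact (hA.inv (hane ρ)).mul (hGd ρ)
  have hw'' : ∀ ρ : ℝ, deriv (deriv wstar) ρ = -(deriv a ρ) / (a ρ) ^ 2 * G ρ + (a ρ)⁻¹ * B ρ := by
    intro ρ
    rw [hw']
    exact (hgd ρ).deriv
  have hw''b : ∀ ρ : ℝ, |deriv (deriv wstar) ρ| ≤
      (M * C₀ / (m ^ 2 * α) + C₀ / m) * Real.exp (-α * |ρ|) := by
    intro ρ
    rw [hw'' ρ]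
    have h1 : |-(deriv a ρ) / (a ρ) ^ 2 * G ρ| ≤ M / m ^ 2 * (C₀ / α * Real.exp (-α * |ρ|)) := by
      rw [abs_mul, abs_div, abs_neg]
      have hd : |deriv a ρ| / |(a ρ) ^ 2| ≤ M / m ^ 2 := by
        rw [abs_of_pos (pow_pos (hapos ρ) 2)]
        exact div_le_div₀ (le_trans hm.le hmM) (ha' ρ) (pow_pos hm 2)
          (pow_le_pow_left₀ hm.le (habdd ρ).1 2)
      exact mul_le_mul hd (hG ρ) (abs_nonneg _) (div_nonneg (hm.trans_le hmM).le (by positivity))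
    have h2 : |(a ρ)⁻¹ * B ρ| ≤ m⁻¹ * (C₀ * Real.exp (-α * |ρ|)) := by
      rw [abs_mul, abs_of_pos (inv_pos.mpr (hapos ρ))]
      exact mul_le_mul (inv_anti₀ hm (habdd ρ).1) (hBdecay ρ) (abs_nonneg _)
        (inv_pos.mpr hm).le
    calc |(-(deriv a ρ) / (a ρ) ^ 2 * G ρ) + (a ρ)⁻¹ * B ρ|
        ≤ |-(deriv a ρ) / (a ρ) ^ 2 * G ρ| + |(a ρ)⁻¹ * B ρ| := abs_add_le _ _
      _ ≤ M / m ^ 2 * (C₀ / α * Real.exp (-α * |ρ|)) + m⁻¹ * (C₀ * Real.exp (-α * |ρ|)) :=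
          add_le_add h1 h2
      _ = (M * C₀ / (m ^ 2 * α) + C₀ / m) * Real.exp (-α * |ρ|) := by field_simp
  -- the limits
  refine ⟨∫ r in Ioi (0:ℝ), g r, -∫ r in Iic (0:ℝ), g r,
    C₀ / (m * α * α) + 2 * (C₀ / (m * α)) + 2 * (M * C₀ / (m ^ 2 * α) + C₀ / m) + 1,
    by have hM : 0 < M := hm.trans_le hmM; positivity, ?_⟩
  intro ρ hρ
  set K0 : ℝ := C₀ / (m * α * α) with hK0
  set K1 : ℝ := C₀ / (m * α) with hK1
  set K2 : ℝ := M * C₀ / (m ^ 2 * α) + C₀ / m with hK2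
  have hexp : 0 < Real.exp (-α * ρ) := Real.exp_pos _
  have hK1pos : (0:ℝ) ≤ K1 := by rw [hK1]; positivity
  have hK2pos : (0:ℝ) ≤ K2 := by have hM : 0 < M := hm.trans_le hmM; rw [hK2]; positivity
  -- first item
  have item1 : |wstar ρ - ∫ r in Ioi (0:ℝ), g r| ≤ K0 * Real.exp (-α * ρ) := by
    have h1 : (∫ r in (0:ℝ)..ρ, g r) = (∫ r in Iic ρ, g r) - ∫ r in Iic (0:ℝ), g r :=
      (intervalIntegral.integral_Iic_sub_Iic hgint.integrableOn hgint.integrableOn).symm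
    have h2 : (∫ r in Iic ρ, g r) + (∫ r in Ioi ρ, g r) = ∫ r, g r :=
      intervalIntegral.integral_Iic_add_Ioi hgint.integrableOn hgint.integrableOn
    have h3 : (∫ r in Iic (0:ℝ), g r) + (∫ r in Ioi (0:ℝ), g r) = ∫ r, g r :=
      intervalIntegral.integral_Iic_add_Ioi hgint.integrableOn hgint.integrableOn
    have key : wstar ρ - (∫ r in Ioi (0:ℝ), g r) = -∫ r in Ioi ρ, g r := by
      rw [hwstar ρ]
      have : (∫ r in (0:ℝ)..ρ, (a r)⁻¹ * ∫ s in Iic r, B s) = ∫ r in (0:ℝ)..ρ, g r := rfl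
      rw [this, h1]; linarith
    rw [key, abs_neg]
    have hb : |∫ r in Ioi ρ, g r| ≤ ∫ r in Ioi ρ, K1 * Real.exp (-α * r) := by
      rw [← Real.norm_eq_abs]
      refine norm_integral_le_of_norm_le ((exp_neg_integrableOn_Ioi ρ hα).const_mul K1) ?_
      refine Filter.Eventually.of_forall fun s => ?_
      rw [Real.norm_eq_abs]
      exact (hgb s).trans (mul_le_mul_of_nonneg_left (hle2 s) hK1pos)
    rw [integral_const_mul, expIoiInt hα ρ] at hb
    calc |∫ r in Ioi ρ, g r| ≤ K1 * (Real.exp (-α * ρ) / α) := hb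
      _ = K0 * Real.exp (-α * ρ) := by rw [hK0, hK1]; field_simp
  -- second item
  have item2 : |wstar (-ρ) - -∫ r in Iic (0:ℝ), g r| ≤ K0 * Real.exp (-α * ρ) := by
    have h1 : (∫ r in (0:ℝ)..(-ρ), g r) = (∫ r in Iic (-ρ), g r) - ∫ r in Iic (0:ℝ), g r :=
      (intervalIntegral.integral_Iic_sub_Iic hgint.integrableOn hgint.integrableOn).symm
    have key : wstar (-ρ) - (-∫ r in Iic (0:ℝ), g r) = ∫ r in Iic (-ρ), g r := by
      rw [hwstar (-ρ)]
      have : (∫ r in (0:ℝ)..(-ρ), (a r)⁻¹ * ∫ s in Iic r, B s) = ∫ r in (0:ℝ)..(-ρ), g r := rfl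
      rw [this, h1]; ring
    rw [key]
    have hb : |∫ r in Iic (-ρ), g r| ≤ ∫ r in Iic (-ρ), K1 * Real.exp (α * r) := by
      rw [← Real.norm_eq_abs]
      refine norm_integral_le_of_norm_le ((expIicIntOn hα (-ρ)).const_mul K1) ?_
      refine Filter.Eventually.of_forall fun s => ?_
      rw [Real.norm_eq_abs]
      exact (hgb s).trans (mul_le_mul_of_nonneg_left (hle1 s) hK1pos)
    rw [integral_const_mul, expIicInt hα (-ρ)] at hb
    calc |∫ r in Iic (-ρ), g r| ≤ K1 * (Real.exp (α * -ρ) / α) := hb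
      _ = K0 * Real.exp (-α * ρ) := by rw [hK0, hK1]; rw [show α * -ρ = -α * ρ by ring]; field_simp
  -- third item
  have item3 : |deriv wstar ρ| + |deriv wstar (-ρ)| ≤ 2 * K1 * Real.exp (-α * ρ) := by
    rw [hw']
    have e1 : |g ρ| ≤ K1 * Real.exp (-α * ρ) := by
      have := hgb ρ; rwa [abs_of_nonneg hρ] at this
    have e2 : |g (-ρ)| ≤ K1 * Real.exp (-α * ρ) := by
      have := hgb (-ρ); rwa [abs_neg, abs_of_nonneg hρ] at this
    linarith
  -- fourth item
  have item4 : |deriv (deriv wstar) ρ| + |deriv (deriv wstar) (-ρ)| ≤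
      2 * K2 * Real.exp (-α * ρ) := by
    have e1 := hw''b ρ
    have e2 := hw''b (-ρ)
    rw [abs_of_nonneg hρ] at e1
    rw [abs_neg, abs_of_nonneg hρ] at e2
    linarith
  have hCge : ∀ K : ℝ, K ≤ K0 + 2 * K1 + 2 * K2 + 1 →
      ∀ x : ℝ, |x| ≤ K * Real.exp (-α * ρ) → True := fun _ _ _ _ => trivial
  refine ⟨?_, ?_, ?_, ?_⟩
  · refine item1.trans ?_
    have : K0 ≤ K0 + 2 * K1 + 2 * K2 + 1 := by linarith
    exact mul_le_mul_of_nonneg_right this hexp.le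
  · refine item2.trans ?_
    have : K0 ≤ K0 + 2 * K1 + 2 * K2 + 1 := by linarith
    exact mul_le_mul_of_nonneg_right this hexp.le
  · refine item3.trans ?_
    have : 2 * K1 ≤ K0 + 2 * K1 + 2 * K2 + 1 := by
      have : (0:ℝ) ≤ K0 := by rw [hK0]; positivity
      linarith
    exact mul_le_mul_of_nonneg_right this hexp.le
  · refine item4.trans ?_
    have : 2 * K2 ≤ K0 + 2 * K1 + 2 * K2 + 1 := by
      have : (0:ℝ) ≤ K0 := by rw [hK0]; positivity
      linarith
    exact mul_le_mul_of_nonneg_right this hexp.le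
end

section
/- Let 0 < m ≤ M, let a : ℝ → ℝ be continuously differentiable with m ≤ a(ρ) ≤ M for all ρ, and let B : ℝ → ℝ be continuous with |B(ρ)| ≤ C₀ e^{−α|ρ|} for all ρ ∈ ℝ, for some α, C₀ > 0. If w : ℝ → ℝ is a bounded, twice continuously differentiable solution of (a(ρ) w'(ρ))' = B(ρ) on ℝ, then lim_{ρ→+∞} w'(ρ) = 0 and lim_{ρ→−∞} w'(ρ) = 0. -/
open Filter Set MeasureTheory

/-- One-sided (at `+∞`) version of the claim. -/
lemma statement14_aux (m M α C₀ : ℝ) (hm : 0 < m) (hmM : m ≤ M) (hα : 0 < α) (hC₀ : 0 < C₀)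
    (a : ℝ → ℝ) (ha : ContDiff ℝ 1 a) (habdd : ∀ ρ : ℝ, m ≤ a ρ ∧ a ρ ≤ M)
    (B : ℝ → ℝ) (hB : Continuous B)
    (hBdecay : ∀ ρ : ℝ, |B ρ| ≤ C₀ * Real.exp (-α * |ρ|))
    (w : ℝ → ℝ) (hwbdd : ∃ C : ℝ, ∀ ρ : ℝ, |w ρ| ≤ C) (hw : ContDiff ℝ 2 w)
    (hsol : ∀ ρ : ℝ, deriv (fun r => a r * deriv w r) ρ = B ρ) :
    Tendsto (deriv w) atTop (nhds 0) := by
  have haM : 0 < M := lt_of_lt_of_le hm hmM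
  have hapos : ∀ ρ, 0 < a ρ := fun ρ => lt_of_lt_of_le hm (habdd ρ).1
  -- regularity
  have hwd : Differentiable ℝ w := hw.differentiable (by norm_num)
  have hw' : ContDiff ℝ 1 (deriv w) := by
    have := (contDiff_succ_iff_deriv (n := 1)).mp (by exact_mod_cast hw)
    exact this.2.2
  have hw'd : Differentiable ℝ (deriv w) := hw'.differentiable one_ne_zero
  have had : Differentiable ℝ a := ha.differentiable one_ne_zero
  set g : ℝ → ℝ := fun ρ => a ρ * deriv w ρ with hgdef
  have hgd : Differentiable ℝ g := had.mul hw'd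
  have hgB : ∀ x : ℝ, HasDerivAt g (B x) x := by
    intro x
    have := (hgd x).hasDerivAt
    rwa [hsol x] at this
  have hga : ∀ ρ, deriv w ρ = g ρ / a ρ := by
    intro ρ
    rw [eq_div_iff (hapos ρ).ne']
    show deriv w ρ * a ρ = a ρ * deriv w ρ
    ring
  -- B is integrable on (0, ∞)
  have hBint : IntegrableOn B (Ioi 0) := by
    refine Integrable.mono' ((exp_neg_integrableOn_Ioi 0 hα).const_mul C₀)
      hB.aestronglyMeasurable ?_
    filter_upwards [ae_restrict_mem measurableSet_Ioi] with x hx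
    have hx0 : 0 ≤ x := le_of_lt hx
    simpa [Real.norm_eq_abs, abs_of_nonneg hx0] using hBdecay x
  -- fundamental theorem: g t = g 0 + ∫ B
  have hfund : ∀ t : ℝ, ∫ x in (0:ℝ)..t, B x = g t - g 0 := by
    intro t
    exact intervalIntegral.integral_eq_sub_of_hasDerivAt (fun x _ => hgB x)
      (hB.intervalIntegrable 0 t)
  -- g tends to a limit L at +∞
  set L : ℝ := g 0 + ∫ x in Ioi (0:ℝ), B x with hLdef
  have hgL : Tendsto g atTop (nhds L) := by
    have h1 : Tendsto (fun t : ℝ => ∫ x in (0:ℝ)..t, B x) atTop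
        (nhds (∫ x in Ioi (0:ℝ), B x)) :=
      MeasureTheory.intervalIntegral_tendsto_integral_Ioi 0 hBint tendsto_id
    have h2 : Tendsto (fun t : ℝ => g 0 + ∫ x in (0:ℝ)..t, B x) atTop (nhds L) :=
      tendsto_const_nhds.add h1
    refine h2.congr (fun t => ?_)
    rw [hfund t]; ring
  obtain ⟨C, hC⟩ := hwbdd
  have hC0 : 0 ≤ C := le_trans (abs_nonneg _) (hC 0)
  -- the limit must be zero, else w grows linearly
  have hL0 : L = 0 := by
    by_contra hL
    rcases lt_or_gt_of_ne hL with hneg | hpos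
    · -- L < 0 : eventually deriv w ≤ L/(2M) < 0
      have hc : L / (2 * M) < 0 := div_neg_of_neg_of_pos hneg (by linarith)
      have hev : ∀ᶠ ρ in atTop, g ρ < L / 2 :=
        hgL.eventually (eventually_lt_nhds (by linarith))
      obtain ⟨T, hT⟩ := eventually_atTop.mp hev
      have hder : ∀ ρ, T ≤ ρ → deriv w ρ ≤ L / (2 * M) := by
        intro ρ hρ
        rw [hga ρ, div_le_div_iff₀ (hapos ρ) (by linarith : (0:ℝ) < 2 * M)]
        have h1 := hT ρ hρ
        have h2 := (habdd ρ).2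
        nlinarith [hapos ρ]
      have key := (convex_Ici T).image_sub_le_mul_sub_of_deriv_le
        (hwd.continuous.continuousOn) (hwd.differentiableOn)
        (C := L / (2 * M)) (fun x hx => hder x (le_of_lt (by simpa [interior_Ici] using hx)))
      have hs : 0 ≤ (2 * C + 1) / (-(L / (2 * M))) :=
        div_nonneg (by linarith) (by linarith)
      have hyT : T ≤ T + (2 * C + 1) / (-(L / (2 * M))) := by linarith
      have h3 := key T self_mem_Ici _ hyT hyT
      have h4 : L / (2 * M) * (T + (2 * C + 1) / (-(L / (2 * M))) - T) = -(2 * C + 1) := by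
        field_simp
        ring
      rw [h4] at h3
      have h5 := abs_le.mp (hC (T + (2 * C + 1) / (-(L / (2 * M)))))
      have h6 := abs_le.mp (hC T)
      linarith
    · -- L > 0 : eventually deriv w ≥ L/(2M) > 0
      have hc : 0 < L / (2 * M) := div_pos hpos (by linarith)
      have hev : ∀ᶠ ρ in atTop, L / 2 < g ρ :=
        hgL.eventually (eventually_gt_nhds (by linarith))
      obtain ⟨T, hT⟩ := eventually_atTop.mp hev
      have hder : ∀ ρ, T ≤ ρ → L / (2 * M) ≤ deriv w ρ := by
        intro ρ hρ
        rw [hga ρ, div_le_div_iff₀ (by linarith : (0:ℝ) < 2 * M) (hapos ρ)]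
        have h1 := hT ρ hρ
        have h2 := (habdd ρ).2
        nlinarith [hapos ρ]
      have key := (convex_Ici T).mul_sub_le_image_sub_of_le_deriv
        (hwd.continuous.continuousOn) (hwd.differentiableOn)
        (C := L / (2 * M)) (fun x hx => hder x (le_of_lt (by simpa [interior_Ici] using hx)))
      have hs : 0 ≤ (2 * C + 1) / (L / (2 * M)) := div_nonneg (by linarith) (le_of_lt hc)
      have hyT : T ≤ T + (2 * C + 1) / (L / (2 * M)) := by linarith
      have h3 := key T self_mem_Ici _ hyT hyT
      have h4 : L / (2 * M) * (T + (2 * C + 1) / (L / (2 * M)) - T) = 2 * C + 1 := by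
        field_simp
        ring
      rw [h4] at h3
      have h5 := abs_le.mp (hC (T + (2 * C + 1) / (L / (2 * M))))
      have h6 := abs_le.mp (hC T)
      linarith
  -- conclude: |w'| ≤ |g|/m → 0
  rw [hL0] at hgL
  have hg0 : Tendsto (fun ρ => |g ρ| / m) atTop (nhds 0) := by
    have := (hgL.abs).div_const m
    simpa using this
  refine squeeze_zero_norm (fun ρ => ?_) hg0
  rw [Real.norm_eq_abs, hga ρ, abs_div, abs_of_pos (hapos ρ)]
  exact div_le_div_of_nonneg_left (abs_nonneg _) hm (habdd ρ).1

/-- If `w` is a bounded, twice continuously differentiable solution of `(a w')' = B` on `ℝ`,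
where `0 < m ≤ a ≤ M` is continuously differentiable and `B` is continuous with exponential
decay, then `w'(ρ) → 0` as `ρ → ±∞` (key intermediate claim in the proof of Lemma A.2). -/
theorem statement14 (m M α C₀ : ℝ) (hm : 0 < m) (hmM : m ≤ M) (hα : 0 < α) (hC₀ : 0 < C₀)
    (a : ℝ → ℝ) (ha : ContDiff ℝ 1 a) (habdd : ∀ ρ : ℝ, m ≤ a ρ ∧ a ρ ≤ M)
    (B : ℝ → ℝ) (hB : Continuous B)
    (hBdecay : ∀ ρ : ℝ, |B ρ| ≤ C₀ * Real.exp (-α * |ρ|))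
    (w : ℝ → ℝ) (hwbdd : ∃ C : ℝ, ∀ ρ : ℝ, |w ρ| ≤ C) (hw : ContDiff ℝ 2 w)
    (hsol : ∀ ρ : ℝ, deriv (fun r => a r * deriv w r) ρ = B ρ) :
    Tendsto (deriv w) atTop (nhds 0) ∧ Tendsto (deriv w) atBot (nhds 0) := by
  constructor
  · exact statement14_aux m M α C₀ hm hmM hα hC₀ a ha habdd B hB hBdecay w hwbdd hw hsol
  · -- reflect through ρ ↦ -ρ and apply the `atTop` case
    have hwd : Differentiable ℝ w := hw.differentiable (by norm_num)
    have hw' : ContDiff ℝ 1 (deriv w) := by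
      have := (contDiff_succ_iff_deriv (n := 1)).mp (by exact_mod_cast hw)
      exact this.2.2
    have hw'd : Differentiable ℝ (deriv w) := hw'.differentiable one_ne_zero
    have had : Differentiable ℝ a := ha.differentiable one_ne_zero
    have hgd : Differentiable ℝ (fun ρ => a ρ * deriv w ρ) := had.mul hw'd
    set w2 : ℝ → ℝ := fun ρ => w (-ρ) with hw2def
    have hw2 : ContDiff ℝ 2 w2 := hw.comp contDiff_id.neg
    have hderiv2 : ∀ ρ : ℝ, deriv w2 ρ = -deriv w (-ρ) := by
      intro ρ
      have h := HasDerivAt.comp ρ (hwd (-ρ)).hasDerivAt (hasDerivAt_neg ρ)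
      have h' : HasDerivAt w2 (deriv w (-ρ) * (-1)) ρ := h
      rw [h'.deriv]; ring
    have hsol2 : ∀ ρ : ℝ, deriv (fun r => (fun s => a (-s)) r * deriv w2 r) ρ = B (-ρ) := by
      intro ρ
      have heq : (fun r => (fun s => a (-s)) r * deriv w2 r)
          = fun r => -((fun s => a s * deriv w s) (-r)) := by
        funext r
        simp only [hderiv2 r]
        ring
      rw [heq]
      have hgB : HasDerivAt (fun ρ => a ρ * deriv w ρ) (B (-ρ)) (-ρ) := by
        have := (hgd (-ρ)).hasDerivAt
        rwa [hsol (-ρ)] at this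
      have h := (HasDerivAt.comp ρ hgB (hasDerivAt_neg ρ)).neg
      have h' : HasDerivAt (fun r => -((fun s => a s * deriv w s) (-r)))
          (-(B (-ρ) * (-1))) ρ := h
      rw [h'.deriv]; ring
    have h2 := statement14_aux m M α C₀ hm hmM hα hC₀ (fun s => a (-s))
      (ha.comp contDiff_id.neg) (fun ρ => habdd (-ρ)) (fun s => B (-s))
      (hB.comp continuous_neg) (fun ρ => by simpa [abs_neg] using hBdecay (-ρ))
      w2 ⟨hwbdd.choose, fun ρ => hwbdd.choose_spec (-ρ)⟩ hw2 hsol2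
    have h3 : Tendsto (fun ρ : ℝ => deriv w (-ρ)) atTop (nhds 0) := by
      have := h2.neg
      rw [neg_zero] at this
      refine this.congr fun ρ => ?_
      rw [hderiv2 ρ, neg_neg]
    have h4 := h3.comp Filter.tendsto_neg_atBot_atTop
    refine h4.congr fun ρ => ?_
    simp [Function.comp]
end
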